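/- arXiv:1808.00551 — 5 statements merged into one kernel-verified Lean document; each statement's English description precedes it below -/
import Mathlib

section
/- For any connected simplicial complex K with n ≥ 2 vertices, if a set S of points in convex position in ℝ^d admits a partition into n parts whose nerve (of convex hulls) is isomorphic to K, then |S| ≥ 2n. -/
/-! Each part of the partition contains at least two points. A part with at most one point has
itself as convex hull; since the nerve is connected and `n ≥ 2`, that hull meets the hull of
another part, which lies in the hull of the remaining points of `S`, contradicting convex
position. -/

open Function

theorem disjoint_convexHull_of_subsingleton {𝕜 E : Type*} [Field 𝕜] [LinearOrder 𝕜]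
    [IsStrictOrderedRing 𝕜] [AddCommGroup E] [Module 𝕜 E] {S A B : Set E}
    (hS : ∀ x ∈ S, x ∉ convexHull 𝕜 (S \ {x})) (hAS : A ⊆ S) (hBS : B ⊆ S)
    (hAB : Disjoint A B) (hA : A.Subsingleton) :
    Disjoint (convexHull 𝕜 A) (convexHull 𝕜 B) := by
  rw [hA.convex.convexHull_eq, Set.disjoint_left]
  intro y hyA hyB
  have hBy : B ⊆ S \ {y} := fun z hz =>
    ⟨hBS hz, fun hzy => hAB.ne_of_mem hyA hz hzy.symm⟩
  exact hS y (hAS hyA) (convexHull_mono hBy hyB)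

theorem two_le_card_of_convexHull_inter_nonempty {𝕜 E ι : Type*} [Field 𝕜] [LinearOrder 𝕜]
    [IsStrictOrderedRing 𝕜] [AddCommGroup E] [Module 𝕜 E] {S : Set E}
    (hS : ∀ x ∈ S, x ∉ convexHull 𝕜 (S \ {x})) {P : ι → Finset E}
    (hPS : ∀ i, (P i : Set E) ⊆ S) (hP : Pairwise (Disjoint on P)) {i j : ι} (hij : i ≠ j)
    (hmeet : (convexHull 𝕜 (P i : Set E) ∩ convexHull 𝕜 (P j : Set E)).Nonempty) :
    2 ≤ (P i).card := by
  by_contra! hcard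
  have hsub : (P i : Set E).Subsingleton := Finset.card_le_one_iff_subsingleton.mp (by omega)
  exact Set.not_disjoint_iff_nonempty_inter.mpr hmeet <|
    disjoint_convexHull_of_subsingleton hS (hPS i) (hPS j)
      (Finset.disjoint_coe.mpr (hP hij)) hsub

theorem lower_bound_connected_complex_general
    {d n : ℕ} (hn : 2 ≤ n)
    -- `K` is an abstract simplicial complex on vertex set `Fin n`
    (K : Finset (Finset (Fin n)))
    -- `K` is connected: its 1-skeleton is a connected graph
    (hKconn : (SimpleGraph.fromRel
        (fun i j => ({i, j} : Finset (Fin n)) ∈ K)).Connected)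
    (S : Finset (Fin d → ℝ))
    -- `S` is in convex position
    (hconv : ∀ x ∈ S, x ∉ convexHull ℝ ((S : Set (Fin d → ℝ)) \ {x}))
    -- a partition of `S` into `n` parts
    (P : Fin n → Finset (Fin d → ℝ))
    (hdisj : ∀ i j, i ≠ j → Disjoint (P i) (P j))
    (hcover : S = Finset.univ.biUnion P)
    -- the nerve of the partition is isomorphic to `K` via a relabelling `σ`
    (σ : Fin n ≃ Fin n)
    (hiso : ∀ I : Finset (Fin n), I.Nonempty →
      (I ∈ K ↔ (⋂ i ∈ I, convexHull ℝ (P (σ i) : Set (Fin d → ℝ))).Nonempty)) :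
    2 * n ≤ S.card := by
  have : Nontrivial (Fin n) := Fin.nontrivial_iff_two_le.mpr hn
  have hPS : ∀ m, (P m : Set (Fin d → ℝ)) ⊆ S := fun m =>
    hcover ▸ Finset.coe_subset.mpr (Finset.subset_biUnion_of_mem P (Finset.mem_univ m))
  have hcard : ∀ m, 2 ≤ (P m).card := by
    intro m
    obtain ⟨j, hadj⟩ := hKconn.preconnected.exists_adj_of_nontrivial (σ.symm m)
    obtain ⟨hmj, hrel⟩ := (SimpleGraph.fromRel_adj _ _ _).mp hadj
    have hedge : {σ.symm m, j} ∈ K := hrel.elim id (fun h => Finset.pair_comm j _ ▸ h)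
    obtain ⟨y, hy⟩ := (hiso _ (Finset.insert_nonempty _ _)).mp hedge
    simp only [Set.mem_iInter, Finset.mem_insert, Finset.mem_singleton] at hy
    refine two_le_card_of_convexHull_inter_nonempty hconv hPS (fun a b hab => hdisj a b hab)
      (fun h => hmj (σ.symm_apply_eq.mpr h)) ⟨y, ?_, hy j (Or.inr rfl)⟩
    simpa using hy (σ.symm m) (Or.inl rfl)
  calc 2 * n = ∑ _m : Fin n, 2 := by simp [mul_comm]
    _ ≤ ∑ m, (P m).card := Finset.sum_le_sum fun m _ => hcard m
    _ = S.card := by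
      rw [hcover, Finset.card_biUnion fun a _ b _ hab => hdisj a b hab]

/-- For any connected simplicial complex `K` with `n ≥ 2` vertices, if a set `S`
of points in convex position in `ℝ^d` admits a partition into `n` parts whose nerve (of convex
hulls) is isomorphic to `K`, then `|S| ≥ 2n`. -/
theorem lower_bound_connected_complex
    {d n : ℕ} (hn : 2 ≤ n)
    -- `K` is an abstract simplicial complex on vertex set `Fin n`
    (K : Finset (Finset (Fin n)))
    (hKdown : ∀ I ∈ K, ∀ J : Finset (Fin n), J ⊆ I → J.Nonempty → J ∈ K)
    (hKverts : ∀ i : Fin n, ({i} : Finset (Fin n)) ∈ K)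
    -- `K` is connected: its 1-skeleton is a connected graph
    (hKconn : (SimpleGraph.fromRel
        (fun i j => ({i, j} : Finset (Fin n)) ∈ K)).Connected)
    (S : Finset (Fin d → ℝ))
    -- `S` is in convex position
    (hconv : ∀ x ∈ S, x ∉ convexHull ℝ ((S : Set (Fin d → ℝ)) \ {x}))
    -- a partition of `S` into `n` parts
    (P : Fin n → Finset (Fin d → ℝ))
    (hne : ∀ i, (P i).Nonempty)
    (hdisj : ∀ i j, i ≠ j → Disjoint (P i) (P j))
    (hcover : S = Finset.univ.biUnion P)
    -- the nerve of the partition is isomorphic to `K` via a relabelling `σ`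
    (σ : Fin n ≃ Fin n)
    (hiso : ∀ I : Finset (Fin n), I.Nonempty →
      (I ∈ K ↔ (⋂ i ∈ I, convexHull ℝ (P (σ i) : Set (Fin d → ℝ))).Nonempty)) :
    2 * n ≤ S.card :=
  lower_bound_connected_complex_general hn K hKconn S hconv P hdisj hcover σ hiso
end

section
/- Let S ⊂ ℝ² be a set of 2n points (n ≥ 1) in general position and suppose there exist p₁, p₂ ∈ S such that the line through p₁ and p₂ divides S \ {p₁,p₂} into two sets A, B each of size n−1, with the property that for every a ∈ A and b ∈ B the segment [a,b] meets the segment [p₁,p₂]. Then the elements of A and B can be paired as (a_1,b_1),…,(a_{n−1},b_{n−1}) such that for all i ≠ j the segments [a_i,b_i] and [a_j,b_j] are disjoint. -/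
/-!
Take a bijection `A → B` minimising the total Euclidean length of the segments `[a, f a]`.
If two of its segments `[a, b]` and `[a', b']` met at a point `x`, then
`|ab'| + |a'b| ≤ |ax| + |xb'| + |a'x| + |xb| = |ab| + |a'b'|`, and general position makes the
inequality strict (equality in a triangle inequality in a strictly convex space forces
collinearity), so exchanging the partners of `a` and `a'` would give a shorter matching.
-/

def sideDet (p q x : Fin 2 → ℝ) : ℝ :=
  (q 0 - p 0) * (x 1 - p 1) - (q 1 - p 1) * (x 0 - p 0)

open Set Finset

section Collinear

variable {k V₁ P₁ V₂ P₂ : Type*} [DivisionRing k] [AddCommGroup V₁] [Module k V₁] [AddTorsor V₁ P₁]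
  [AddCommGroup V₂] [Module k V₂] [AddTorsor V₂ P₂]

theorem Collinear.map {s : Set P₁} (h : Collinear k s) (f : P₁ →ᵃ[k] P₂) :
    Collinear k (f '' s) := by
  obtain ⟨p₀, v, hv⟩ := (collinear_iff_exists_forall_eq_smul_vadd s).mp h
  refine (collinear_iff_exists_forall_eq_smul_vadd _).mpr ⟨f p₀, f.linear v, ?_⟩
  rintro _ ⟨p, hp, rfl⟩
  obtain ⟨r, rfl⟩ := hv p hp
  exact ⟨r, by rw [AffineMap.map_vadd, map_smul]⟩

end Collinear

section StrictConvex

variable {V P : Type*} [NormedAddCommGroup V] [NormedSpace ℝ V] [StrictConvexSpace ℝ V]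
  [MetricSpace P] [NormedAddTorsor V P]

theorem dist_add_dist_lt_of_wbtw_of_wbtw {a b a' b' x : P} (hx : Wbtw ℝ a x b)
    (hx' : Wbtw ℝ a' x b') (h₁ : ¬Collinear ℝ {a', a, b'}) (h₂ : ¬Collinear ℝ {a, b, b'}) :
    dist a b' + dist a' b < dist a b + dist a' b' := by
  have hab := hx.dist_add_dist
  have hab' := hx'.dist_add_dist
  have tri₁ := dist_triangle a x b'
  have tri₂ := dist_triangle a' x b
  by_contra! hle
  have hw : Wbtw ℝ a x b' := dist_add_dist_eq_iff.mp (by linarith)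
  -- so `b` and `b'` both lie on the line `a x`, unless `x = a`, which then lies on `[a', b']`
  rcases eq_or_ne x a with rfl | hxa
  · exact h₁ hx'.collinear
  · exact h₂ (collinear_triple_of_mem_affineSpan_pair (left_mem_affineSpan_pair ℝ a x)
      (hx.right_mem_affineSpan_of_left_ne hxa.symm) (hw.right_mem_affineSpan_of_left_ne hxa.symm))

end StrictConvex

section Assignment

variable {α : Type*} {A B : Finset α} (c : α → α → ℝ)

theorem exists_minimalFor_sum_of_bijOn [Nonempty α] (hcard : #A = #B) :
    ∃ f, MinimalFor (fun f => BijOn f A B) (fun f => ∑ a ∈ A, c a (f a)) f := by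
  refine Set.Finite.exists_minimalFor' _ _ ?_ ?_
  · refine (Set.finite_range fun g : A → B => ∑ a : A, c a (g a)).subset ?_
    rintro _ ⟨f, hf, rfl⟩
    exact ⟨hf.1.restrict, (Finset.sum_coe_sort A fun a => c a (f a))⟩
  · exact A.finite_toSet.exists_bijOn_of_encard_eq (by simp [hcard])

theorem sum_comp_swap_sub_sum [DecidableEq α] (f : α → α) {u v : α} (hu : u ∈ A) (hv : v ∈ A)
    (huv : u ≠ v) :
    ∑ a ∈ A, c a (f (Equiv.swap u v a)) - ∑ a ∈ A, c a (f a) =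
      c u (f v) + c v (f u) - (c u (f u) + c v (f v)) := by
  rw [← Finset.sum_sub_distrib, Finset.sum_eq_add_of_mem u v hu hv huv fun a _ ha => by
    simp [Equiv.swap_apply_of_ne_of_ne ha.1 ha.2]]
  simp only [Equiv.swap_apply_left, Equiv.swap_apply_right]
  ring

theorem exists_bijOn_forall_not_of_swap_lt [Nonempty α] (hcard : #A = #B)
    {R : α → α → α → α → Prop}
    (hswap : ∀ a ∈ A, ∀ a' ∈ A, a ≠ a' → ∀ b ∈ B, ∀ b' ∈ B, b ≠ b' → R a b a' b' →
      c a b' + c a' b < c a b + c a' b') :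
    ∃ f, BijOn f A B ∧ ∀ a ∈ A, ∀ a' ∈ A, a ≠ a' → ¬R a (f a) a' (f a') := by
  classical
  obtain ⟨f, hf, hmin⟩ := exists_minimalFor_sum_of_bijOn c hcard
  refine ⟨f, hf, fun a ha a' ha' hne hR => ?_⟩
  have hswapped : BijOn (f ∘ Equiv.swap a a') A B :=
    hf.comp (Equiv.swap_bijOn_self (by simp [ha, ha']))
  have hlt := hswap a ha a' ha' hne _ (hf.mapsTo ha) _ (hf.mapsTo ha')
    (hf.injOn.ne ha ha' hne) hR
  have hdiff := sum_comp_swap_sub_sum c f ha ha' hne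
  have hle : ∑ x ∈ A, c x (f x) ≤ ∑ x ∈ A, c x (f (Equiv.swap a a' x)) :=
    hmin hswapped (by simp only; linarith)
  linarith

end Assignment

theorem pairing_lemma_general {n : ℕ}
    (S : Finset (Fin 2 → ℝ))
    -- general position: no three points collinear
    (hgen : ∀ x ∈ S, ∀ y ∈ S, ∀ z ∈ S, x ≠ y → y ≠ z → x ≠ z →
      ¬ Collinear ℝ ({x, y, z} : Set (Fin 2 → ℝ)))
    (p₁ p₂ : Fin 2 → ℝ)
    (A B : Finset (Fin 2 → ℝ))
    (hAB : A ∪ B = S \ {p₁, p₂}) (hABdisj : Disjoint A B)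
    (hAcard : A.card = n - 1) (hBcard : B.card = n - 1) :
    ∃ f : (Fin 2 → ℝ) → (Fin 2 → ℝ),
      Set.BijOn f (A : Set (Fin 2 → ℝ)) (B : Set (Fin 2 → ℝ)) ∧
      ∀ a ∈ A, ∀ a' ∈ A, a ≠ a' →
        convexHull ℝ ({a, f a} : Set (Fin 2 → ℝ)) ∩
          convexHull ℝ ({a', f a'} : Set (Fin 2 → ℝ)) = ∅ := by
  have hS : ∀ x ∈ A ∪ B, x ∈ S := fun x hx => (Finset.mem_sdiff.mp (hAB ▸ hx)).1
  have hAS : ∀ a ∈ A, a ∈ S := fun a ha => hS a (Finset.mem_union_left B ha)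
  have hBS : ∀ b ∈ B, b ∈ S := fun b hb => hS b (Finset.mem_union_right A hb)
  have hAB_ne : ∀ a ∈ A, ∀ b ∈ B, a ≠ b := fun a ha b hb h =>
    Finset.disjoint_left.mp hABdisj ha (h ▸ hb)
  let e := (EuclideanSpace.equiv (Fin 2) ℝ).symm.toLinearEquiv.toAffineEquiv
  have hcoll {x y z} (h : Collinear ℝ {e x, e y, e z}) : Collinear ℝ {x, y, z} := by
    simpa [Set.image_insert_eq] using h.map e.symm.toAffineMap
  obtain ⟨f, hf, hdisj⟩ := exists_bijOn_forall_not_of_swap_lt (fun x y => dist (e x) (e y))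
    (hAcard.trans hBcard.symm) (R := fun a b a' b' =>
      (convexHull ℝ {a, b} ∩ convexHull ℝ {a', b'} : Set (Fin 2 → ℝ)).Nonempty)
    fun a ha a' ha' hne b hb b' hb' hbne ⟨x, hx, hx'⟩ => by
      rw [convexHull_pair, mem_segment_iff_wbtw] at hx hx'
      exact dist_add_dist_lt_of_wbtw_of_wbtw (hx.map e.toAffineMap) (hx'.map e.toAffineMap)
        (fun h => hgen a' (hAS a' ha') a (hAS a ha) b' (hBS b' hb') hne.symm
          (hAB_ne a ha b' hb') (hAB_ne a' ha' b' hb') (hcoll h))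
        (fun h => hgen a (hAS a ha) b (hBS b hb) b' (hBS b' hb') (hAB_ne a ha b hb) hbne
          (hAB_ne a ha b' hb') (hcoll h))
  exact ⟨f, hf, fun a ha a' ha' hne => Set.not_nonempty_iff_eq_empty.mp (hdisj a ha a' ha' hne)⟩

/-- Let `S ⊂ ℝ²` be `2n` points in general position and `p₁, p₂ ∈ S` such that
the line through `p₁, p₂` divides `S \ {p₁,p₂}` into sets `A, B` of size `n-1` each, with
every segment `[a,b]` (`a ∈ A`, `b ∈ B`) meeting `[p₁,p₂]`. Then `A` and `B` can be paired
off so that the corresponding segments are pairwise disjoint. -/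
theorem pairing_lemma {n : ℕ} (hn : 1 ≤ n)
    (S : Finset (Fin 2 → ℝ)) (hcard : S.card = 2 * n)
    -- general position: no three points collinear
    (hgen : ∀ x ∈ S, ∀ y ∈ S, ∀ z ∈ S, x ≠ y → y ≠ z → x ≠ z →
      ¬ Collinear ℝ ({x, y, z} : Set (Fin 2 → ℝ)))
    (p₁ p₂ : Fin 2 → ℝ) (hp₁ : p₁ ∈ S) (hp₂ : p₂ ∈ S) (hpne : p₁ ≠ p₂)
    (A B : Finset (Fin 2 → ℝ))
    (hAB : A ∪ B = S \ {p₁, p₂}) (hABdisj : Disjoint A B)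
    (hAcard : A.card = n - 1) (hBcard : B.card = n - 1)
    -- `A` and `B` lie in the two opposite open half-planes of the line through `p₁, p₂`
    (hAside : ∀ a ∈ A, 0 < sideDet p₁ p₂ a)
    (hBside : ∀ b ∈ B, sideDet p₁ p₂ b < 0)
    -- every segment between `A` and `B` meets the segment `[p₁, p₂]`
    (hmeet : ∀ a ∈ A, ∀ b ∈ B,
      (convexHull ℝ ({a, b} : Set (Fin 2 → ℝ)) ∩
        convexHull ℝ ({p₁, p₂} : Set (Fin 2 → ℝ))).Nonempty) :
    ∃ f : (Fin 2 → ℝ) → (Fin 2 → ℝ),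
      Set.BijOn f (A : Set (Fin 2 → ℝ)) (B : Set (Fin 2 → ℝ)) ∧
      ∀ a ∈ A, ∀ a' ∈ A, a ≠ a' →
        convexHull ℝ ({a, f a} : Set (Fin 2 → ℝ)) ∩
          convexHull ℝ ({a', f a'} : Set (Fin 2 → ℝ)) = ∅ :=
  pairing_lemma_general S hgen p₁ p₂ A B hAB hABdisj hAcard hBcard
end

section
/- Every set of (d+1)(n−1)+1 points in general position in ℝ^d admits a partition into n parts whose nerve is the star graph St_n on n vertices: one central part whose convex hull meets the convex hull of each of the other n−1 parts, while the convex hulls of any two non-central parts are disjoint. -/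
/-!
Order `S` by a linear functional that is injective on it. Cutting the lowest `(d + 1)(n - 1)`
points into `n - 1` consecutive runs of `d + 1` points gives blocks whose convex hulls are pairwise
separated by level sets of the functional; let `p` be the remaining point. Each block together
with `p` has `d + 2` points, so Radon's theorem splits it into two parts with intersecting hulls,
the one containing `p` and the other, `D`. The sets `D` are the leaves, and all other points form
the centre, whose hull contains the `p`-side of every Radon partition.
-/

open Finset Module Function

theorem Module.Dual.exists_injOn {K M : Type*} [Field K] [Infinite K] [AddCommGroup M]
    [Module K M] (S : Finset M) : ∃ f : Dual K M, Set.InjOn f S := by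
  obtain ⟨f, hf⟩ := exists_dual_forall_apply_ne_zero (K := K)
    (fun q : {q : S × S // q.1 ≠ q.2} => (q.1.1 : M) - q.1.2)
    (fun q => sub_ne_zero.mpr (Subtype.coe_ne_coe.mpr q.2))
  refine ⟨f, fun x hx y hy hxy => by_contra fun hne => ?_⟩
  exact hf ⟨(⟨x, hx⟩, ⟨y, hy⟩), by simpa using hne⟩ (by simp [hxy])

theorem Finset.exists_subset_card_eq_forall_lt {α β : Type*} [DecidableEq α] [LinearOrder β]
    (f : α → β) (s : Finset α) (hf : Set.InjOn f s) {k : ℕ} (hk : k ≤ #s) :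
    ∃ t ⊆ s, #t = k ∧ ∀ x ∈ t, ∀ y ∈ s \ t, f x < f y := by
  induction k with
  | zero => exact ⟨∅, empty_subset s, card_empty, by simp⟩
  | succ k ih =>
    obtain ⟨t, hts, htk, hlt⟩ := ih (by omega)
    obtain ⟨z, hz, hmin⟩ := (s \ t).exists_min_image f
      (card_pos.mp (by rw [card_sdiff_of_subset hts]; omega))
    have hzt : z ∉ t := (mem_sdiff.mp hz).2
    refine ⟨insert z t, insert_subset (mem_sdiff.mp hz).1 hts,
      by rw [card_insert_of_notMem hzt, htk], fun x hx y hy => ?_⟩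
    have hy' : y ∈ s \ t := sdiff_subset_sdiff le_rfl (subset_insert z t) hy
    rcases mem_insert.mp hx with rfl | hx
    · refine (hmin y hy').lt_of_ne fun h => ?_
      have := hf (mem_sdiff.mp hz).1 (mem_sdiff.mp hy').1 h
      exact (mem_sdiff.mp hy).2 (this ▸ mem_insert_self x t)
    · exact hlt x hx y hy'

section StarParts

variable {α ι : Type*} [DecidableEq α] [Fintype ι] [DecidableEq ι]

def starParts (S : Finset α) (c : ι) (D : ι → Finset α) : ι → Finset α :=
  Function.update D c (S \ (univ.erase c).biUnion D)

variable {S : Finset α} {c : ι} {D : ι → Finset α}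

theorem starParts_of_ne {i : ι} (hi : i ≠ c) : starParts S c D i = D i :=
  Function.update_of_ne hi _ _

theorem mem_starParts_self {x : α} :
    x ∈ starParts S c D c ↔ x ∈ S ∧ ∀ j ≠ c, x ∉ D j := by
  simp [starParts]

theorem biUnion_starParts (hD : ∀ i ≠ c, D i ⊆ S) : univ.biUnion (starParts S c D) = S := by
  ext x
  simp only [mem_biUnion, mem_univ, true_and]
  constructor
  · rintro ⟨i, hx⟩
    rcases eq_or_ne i c with rfl | hi
    · exact (mem_starParts_self.mp hx).1
    · rw [starParts_of_ne hi] at hx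
      exact hD i hi hx
  · intro hx
    by_cases h : ∃ j ≠ c, x ∈ D j
    · obtain ⟨j, hj, hxj⟩ := h
      exact ⟨j, by rwa [starParts_of_ne hj]⟩
    · push Not at h
      exact ⟨c, mem_starParts_self.mpr ⟨hx, h⟩⟩

theorem pairwise_disjoint_starParts (hD : ({c}ᶜ : Set ι).Pairwise (Disjoint on D)) :
    Pairwise (Disjoint on starParts S c D) := by
  have hcenter : ∀ j ≠ c, Disjoint (starParts S c D c) (starParts S c D j) := fun j hj =>
    disjoint_left.mpr fun x hx hxj =>
      (mem_starParts_self.mp hx).2 j hj (by rwa [starParts_of_ne hj] at hxj)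
  intro i j hij
  rcases eq_or_ne i c with rfl | hi
  · exact hcenter j hij.symm
  rcases eq_or_ne j c with rfl | hj
  · exact (hcenter i hi).symm
  simpa only [Function.onFun, starParts_of_ne hi, starParts_of_ne hj] using hD hi hj hij

end StarParts

theorem Set.inter_inter_eq_empty_of_pairwise_disjoint_compl_singleton {α ι : Type*}
    {A : ι → Set α} {c : ι} (hA : ({c}ᶜ : Set ι).Pairwise (Disjoint on A)) {i j k : ι}
    (hij : i ≠ j) (hjk : j ≠ k) (hik : i ≠ k) : A i ∩ A j ∩ A k = ∅ := by
  rcases eq_or_ne i c with rfl | hi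
  · exact Set.subset_empty_iff.mp fun x hx => (hA hij.symm hik.symm hjk).le_bot ⟨hx.1.2, hx.2⟩
  rcases eq_or_ne j c with rfl | hj
  · exact Set.subset_empty_iff.mp fun x hx => (hA hi hjk.symm hik).le_bot ⟨hx.1.1, hx.2⟩
  · exact Set.subset_empty_iff.mp fun x hx => (hA hi hj hij).le_bot hx.1

section Convex

variable {𝕜 E : Type*} [Field 𝕜] [LinearOrder 𝕜] [IsStrictOrderedRing 𝕜] [AddCommGroup E]
  [Module 𝕜 E]

theorem disjoint_convexHull_of_forall_lt (f : E →ₗ[𝕜] 𝕜) {A B : Set E}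
    (h : ∀ x ∈ A, ∀ y ∈ B, f x < f y) : Disjoint (convexHull 𝕜 A) (convexHull 𝕜 B) := by
  have hA : ∀ z ∈ convexHull 𝕜 A, ∀ y ∈ B, f z < f y := fun z hz y hy =>
    convexHull_min (fun x hx => h x hx y hy) (convex_halfSpace_lt f.isLinear (f y)) hz
  refine Set.disjoint_left.mpr fun z hzA hzB => lt_irrefl (f z) ?_
  exact convexHull_min (fun y hy => hA z hzA y hy) (convex_halfSpace_gt f.isLinear (f z)) hzB

theorem exists_radon_partition_of_mem [DecidableEq E] [FiniteDimensional 𝕜 E] {A : Finset E}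
    {p : E} (hp : p ∈ A) (hA : finrank 𝕜 E + 2 ≤ #A) :
    ∃ D ⊆ A.erase p, D.Nonempty ∧
      (convexHull 𝕜 (↑(A \ D) : Set E) ∩ convexHull 𝕜 ↑D).Nonempty := by
  have hdep : ¬ AffineIndependent 𝕜 ((↑) : A → E) := fun h => by
    have := h.card_le_finrank_succ.trans (Nat.add_le_add_right (Submodule.finrank_le _) 1)
    rw [Fintype.card_coe] at this
    omega
  obtain ⟨I, hI⟩ := Convex.radon_partition hdep
  obtain ⟨J, hJ, hpJ⟩ : ∃ J : Set A, (convexHull 𝕜 (Subtype.val '' Jᶜ) ∩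
      convexHull 𝕜 (Subtype.val '' J)).Nonempty ∧ ⟨p, hp⟩ ∉ J := by
    by_cases h : ⟨p, hp⟩ ∈ I
    · exact ⟨Iᶜ, by rwa [compl_compl], not_not.mpr h⟩
    · exact ⟨I, Set.inter_comm _ _ ▸ hI, h⟩
  classical
  have hD : (↑(J.toFinset.image Subtype.val) : Set E) = Subtype.val '' J := by simp
  have hAD : (↑(A \ J.toFinset.image Subtype.val) : Set E) = Subtype.val '' Jᶜ := by
    rw [coe_sdiff, hD, Set.image_compl_eq_range_sdiff_image Subtype.val_injective,
      Subtype.range_coe]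
  refine ⟨J.toFinset.image Subtype.val, fun x hx => ?_, ?_, by rwa [hAD, hD]⟩
  · obtain ⟨⟨y, hyA⟩, hy, rfl⟩ := mem_image.mp hx
    refine mem_erase.mpr ⟨?_, hyA⟩
    rintro rfl
    exact hpJ (Set.mem_toFinset.mp hy)
  · rw [← coe_nonempty, hD]
    exact convexHull_nonempty_iff.mp ⟨_, hJ.some_mem.2⟩

theorem exists_separated_blocks [DecidableEq E] (f : E →ₗ[𝕜] 𝕜) (k m : ℕ) {S : Finset E}
    (hf : Set.InjOn f S) (hS : k * m < #S) :
    ∃ p ∈ S, ∃ B : Fin m → Finset E, (∀ i, B i ⊆ S.erase p ∧ #(B i) = k) ∧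
      Pairwise (Disjoint on fun i => convexHull 𝕜 (B i : Set E)) := by
  induction m generalizing S with
  | zero =>
    obtain ⟨p, hp⟩ := card_pos.mp (by omega)
    exact ⟨p, hp, Fin.elim0, fun i => i.elim0, fun i => i.elim0⟩
  | succ m ih =>
    obtain ⟨t, hts, htk, hlt⟩ := S.exists_subset_card_eq_forall_lt f hf (k := k) (by nlinarith)
    obtain ⟨p, hp, B, hB, hBdisj⟩ := ih (hf.mono sdiff_subset) (by
      rw [card_sdiff_of_subset hts]; rw [Nat.mul_succ] at hS; omega)
    have hsep : ∀ j, Disjoint (convexHull 𝕜 (t : Set E)) (convexHull 𝕜 (B j : Set E)) := fun j =>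
      disjoint_convexHull_of_forall_lt f fun x hx y hy =>
        hlt x hx y (erase_subset p _ ((hB j).1 hy))
    refine ⟨p, (mem_sdiff.mp hp).1, Fin.cons t B, fun i => ?_, fun i j hij => ?_⟩
    · cases i using Fin.cases with
      | zero =>
        refine ⟨fun x hx => mem_erase.mpr ⟨?_, hts hx⟩, htk⟩
        rintro rfl
        exact (mem_sdiff.mp hp).2 hx
      | succ i => exact ⟨(hB i).1.trans (erase_subset_erase p sdiff_subset), (hB i).2⟩
    · cases i using Fin.cases <;> cases j using Fin.cases
      case zero.zero => exact absurd rfl hij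
      case zero.succ j => exact hsep j
      case succ.zero i => exact (hsep i).symm
      case succ.succ i j => exact hBdisj (ne_of_apply_ne Fin.succ hij)

theorem exists_star_partition [DecidableEq E] [FiniteDimensional 𝕜 E] {ι : Type*} [Fintype ι]
    [DecidableEq ι] {S : Finset E} {p : E} (hp : p ∈ S) (c : ι) (B : ι → Finset E)
    (hB : ∀ i ≠ c, B i ⊆ S.erase p ∧ finrank 𝕜 E + 1 ≤ #(B i))
    (hsep : ({c}ᶜ : Set ι).Pairwise (Disjoint on fun i => convexHull 𝕜 (B i : Set E))) :
    ∃ P : ι → Finset E, (∀ i, (P i).Nonempty) ∧ Pairwise (Disjoint on P) ∧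
      S = univ.biUnion P ∧
      (∀ i ≠ c, (convexHull 𝕜 (P c : Set E) ∩ convexHull 𝕜 (P i : Set E)).Nonempty) ∧
      ({c}ᶜ : Set ι).Pairwise (Disjoint on fun i => convexHull 𝕜 (P i : Set E)) := by
  have hpB : ∀ i ≠ c, p ∉ B i := fun i hi h => (mem_erase.mp ((hB i hi).1 h)).1 rfl
  have hBdisj : ∀ i ≠ c, ∀ j ≠ c, i ≠ j → Disjoint (B i) (B j) := fun i hi j hj hij =>
    disjoint_coe.mp ((hsep hi hj hij).mono (subset_convexHull 𝕜 _) (subset_convexHull 𝕜 _))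
  have hradon : ∀ i, ∃ D ⊆ B i, i ≠ c → D.Nonempty ∧
      (convexHull 𝕜 (↑(insert p (B i) \ D) : Set E) ∩ convexHull 𝕜 ↑D).Nonempty := by
    intro i
    by_cases hi : i = c
    · exact ⟨∅, empty_subset _, absurd hi⟩
    obtain ⟨D, hD, hmeet⟩ := exists_radon_partition_of_mem (𝕜 := 𝕜) (mem_insert_self p (B i))
      (by rw [card_insert_of_notMem (hpB i hi)]; linarith [(hB i hi).2])
    exact ⟨D, by rwa [erase_insert (hpB i hi)] at hD, fun _ => hmeet⟩
  choose D hDB hD using hradon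
  have hDS : ∀ i ≠ c, D i ⊆ S.erase p := fun i hi => (hDB i).trans (hB i hi).1
  have hcenter : ∀ i ≠ c, insert p (B i) \ D i ⊆ starParts S c D c := by
    intro i hi x hx
    rw [mem_sdiff, mem_insert] at hx
    refine mem_starParts_self.mpr ⟨?_, fun j hj hxj => ?_⟩
    · rcases hx.1 with rfl | hxB
      exacts [hp, mem_of_mem_erase ((hB i hi).1 hxB)]
    rcases eq_or_ne j i with rfl | hji
    · exact hx.2 hxj
    rcases hx.1 with rfl | hxB
    · exact (mem_erase.mp (hDS j hj hxj)).1 rfl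
    · exact disjoint_left.mp (hBdisj i hi j hj hji.symm) hxB (hDB j hxj)
  refine ⟨starParts S c D, fun i => ?_, pairwise_disjoint_starParts fun i hi j hj hij =>
    (hBdisj i hi j hj hij).mono (hDB i) (hDB j),
    (biUnion_starParts fun i hi => (hDS i hi).trans (erase_subset p S)).symm,
    fun i hi => ?_, fun i hi j hj hij => ?_⟩
  · rcases eq_or_ne i c with rfl | hi
    · exact ⟨p, mem_starParts_self.mpr ⟨hp, fun j hj h => (mem_erase.mp (hDS j hj h)).1 rfl⟩⟩
    · rw [starParts_of_ne hi]
      exact (hD i hi).1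
  · obtain ⟨z, hz, hzD⟩ := (hD i hi).2
    exact ⟨z, convexHull_mono (coe_subset.mpr (hcenter i hi)) hz, by rwa [starParts_of_ne hi]⟩
  · simpa only [onFun, starParts_of_ne hi, starParts_of_ne hj] using (hsep hi hj hij).mono
      (convexHull_mono (coe_subset.mpr (hDB i))) (convexHull_mono (coe_subset.mpr (hDB j)))

end Convex

theorem star_partition_induced_general
    {d n : ℕ} (hn : 0 < n)
    (S : Finset (Fin d → ℝ)) (hcard : S.card = (d + 1) * (n - 1) + 1) :
    ∃ P : Fin n → Finset (Fin d → ℝ),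
      (∀ i, (P i).Nonempty) ∧
      (∀ i j, i ≠ j → Disjoint (P i) (P j)) ∧
      S = Finset.univ.biUnion P ∧
      (∀ i, i ≠ (⟨0, hn⟩ : Fin n) →
        (convexHull ℝ (P ⟨0, hn⟩ : Set (Fin d → ℝ)) ∩
          convexHull ℝ (P i : Set (Fin d → ℝ))).Nonempty) ∧
      (∀ i j, i ≠ (⟨0, hn⟩ : Fin n) → j ≠ (⟨0, hn⟩ : Fin n) → i ≠ j →
        convexHull ℝ (P i : Set (Fin d → ℝ)) ∩
          convexHull ℝ (P j : Set (Fin d → ℝ)) = ∅) ∧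
      (∀ i j k, i ≠ j → j ≠ k → i ≠ k →
        convexHull ℝ (P i : Set (Fin d → ℝ)) ∩
          convexHull ℝ (P j : Set (Fin d → ℝ)) ∩
          convexHull ℝ (P k : Set (Fin d → ℝ)) = ∅) := by
  obtain ⟨m, rfl⟩ : ∃ m, n = m + 1 := ⟨n - 1, by omega⟩
  obtain ⟨f, hf⟩ := Module.Dual.exists_injOn (K := ℝ) S
  obtain ⟨p, hp, B, hB, hBdisj⟩ := exists_separated_blocks f (d + 1) m hf (by simp [hcard])
  let B' : Fin (m + 1) → Finset (Fin d → ℝ) := Fin.cons ∅ B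
  have hleafB : ∀ i ≠ 0, B' i ⊆ S.erase p ∧ finrank ℝ (Fin d → ℝ) + 1 ≤ #(B' i) := by
    intro i hi
    obtain ⟨i, rfl⟩ := Fin.exists_succ_eq.mpr hi
    simp only [B', Fin.cons_succ, finrank_fin_fun, (hB i).2]
    exact ⟨(hB i).1, le_rfl⟩
  have hsepB : ({0}ᶜ : Set (Fin (m + 1))).Pairwise
      (Disjoint on fun i => convexHull ℝ (B' i : Set (Fin d → ℝ))) := by
    intro i hi j hj hij
    obtain ⟨i, rfl⟩ := Fin.exists_succ_eq.mpr hi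
    obtain ⟨j, rfl⟩ := Fin.exists_succ_eq.mpr hj
    exact hBdisj (ne_of_apply_ne Fin.succ hij)
  obtain ⟨P, hne, hdisj, hS, hmeet, hleaves⟩ := exists_star_partition hp 0 B' hleafB hsepB
  exact ⟨P, hne, fun i j hij => hdisj hij, hS, hmeet,
    fun i j hi hj hij => (hleaves hi hj hij).inter_eq,
    fun i j k => Set.inter_inter_eq_empty_of_pairwise_disjoint_compl_singleton hleaves⟩

/-- Every set of `(d+1)(n-1)+1` points in general position in `ℝ^d` admits a
partition into `n` parts whose nerve is the star `St_n`: the convex hull of the central part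
(indexed by `0`) meets that of every other part, convex hulls of distinct non-central parts
are disjoint, and no three parts have a common point. -/
theorem star_partition_induced
    {d n : ℕ} (hd : 1 ≤ d) (hn : 0 < n)
    (S : Finset (Fin d → ℝ)) (hcard : S.card = (d + 1) * (n - 1) + 1)
    -- general position: any `d+1` points of `S` are affinely independent
    (hgen : ∀ T : Finset (Fin d → ℝ), T ⊆ S → T.card = d + 1 →
      AffineIndependent ℝ (fun x : T => (x : Fin d → ℝ))) :
    ∃ P : Fin n → Finset (Fin d → ℝ),
      (∀ i, (P i).Nonempty) ∧
      (∀ i j, i ≠ j → Disjoint (P i) (P j)) ∧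
      S = Finset.univ.biUnion P ∧
      (∀ i, i ≠ (⟨0, hn⟩ : Fin n) →
        (convexHull ℝ (P ⟨0, hn⟩ : Set (Fin d → ℝ)) ∩
          convexHull ℝ (P i : Set (Fin d → ℝ))).Nonempty) ∧
      (∀ i j, i ≠ (⟨0, hn⟩ : Fin n) → j ≠ (⟨0, hn⟩ : Fin n) → i ≠ j →
        convexHull ℝ (P i : Set (Fin d → ℝ)) ∩
          convexHull ℝ (P j : Set (Fin d → ℝ)) = ∅) ∧
      (∀ i j k, i ≠ j → j ≠ k → i ≠ k →
        convexHull ℝ (P i : Set (Fin d → ℝ)) ∩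
          convexHull ℝ (P j : Set (Fin d → ℝ)) ∩
          convexHull ℝ (P k : Set (Fin d → ℝ)) = ∅) :=
  star_partition_induced_general hn S hcard
end

section
/- Every caterpillar tree T on n nodes is partition induced on every set of at least (d+1)(n−1)+1 points in general position in ℝ^d; that is, the Tverberg number Tv(T,d) is at most (d+1)(n−1)+1. -/
/-!
Order the points by a linear functional `ℓ` that is injective on `S`, and build the caterpillar
one vertex at a time: the root `v 0`, its leaves, then `v 1`, its leaves, and so on. Every new
vertex `w` has exactly one earlier neighbour, the current head `h` (the last spine vertex added),
and it consumes the next `d + 1` points `B` in the `ℓ`-order. Radon's theorem, applied to `B`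
together with a point `c` already in the part of `h`, splits `B = Q ∪ (B \ Q)` so that the hulls
of `Q` and `{c} ∪ (B \ Q)` meet; `w` receives `Q` and `h` receives `B \ Q`. A part only grows
while it is the head, and then only by points lying `ℓ`-above everything used so far, so parts of
non-adjacent vertices always stay separated by a level set of `ℓ`. Triple intersections are empty
because a tree has no triangles, and the surplus points go to the root at the start.
-/

/-- A tree `T` on `Fin n` is a caterpillar if it has a central path such that every vertex
is on the path or adjacent to a vertex of the path. -/
def IsCaterpillar {n : ℕ} (T : SimpleGraph (Fin n)) : Prop :=
  T.IsTree ∧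
  ∃ (m : ℕ) (v : Fin m → Fin n),
    Function.Injective v ∧
    (∀ (i : Fin m) (h : (i : ℕ) + 1 < m), T.Adj (v i) (v ⟨i + 1, h⟩)) ∧
    (∀ x : Fin n, (∃ i, v i = x) ∨ ∃ i, T.Adj (v i) x)

open Finset Module Function

def Precedes {α β : Type*} [LT β] (f : α → β) (A B : Finset α) : Prop :=
  ∀ x ∈ A, ∀ y ∈ B, f x < f y

section Precedes

variable {α β : Type*} [DecidableEq α] [LinearOrder β] {f : α → β} {A A' B B' C : Finset α}

omit [DecidableEq α] in
theorem Precedes.mono (h : Precedes f A B) (hA : A' ⊆ A) (hB : B' ⊆ B) : Precedes f A' B' :=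
  fun x hx y hy => h x (hA hx) y (hB hy)

theorem Precedes.union_left (hA : Precedes f A C) (hB : Precedes f B C) :
    Precedes f (A ∪ B) C := by
  intro x hx y hy
  rcases mem_union.1 hx with hx | hx
  exacts [hA x hx y hy, hB x hx y hy]

theorem Precedes.union_right (hB : Precedes f A B) (hC : Precedes f A C) :
    Precedes f A (B ∪ C) := by
  intro x hx y hy
  rcases mem_union.1 hy with hy | hy
  exacts [hB x hx y hy, hC x hx y hy]

end Precedes

theorem Finset.exists_subset_card_eq_precedes {α β : Type*} [DecidableEq α] [LinearOrder β]
    {f : α → β} {R : Finset α} (hf : Set.InjOn f R) :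
    ∀ k ≤ #R, ∃ B ⊆ R, #B = k ∧ Precedes f B (R \ B)
  | 0, _ => ⟨∅, empty_subset _, rfl, fun _ h => absurd h (notMem_empty _)⟩
  | k + 1, hk => by
    obtain ⟨B, hBR, hB, hprec⟩ := exists_subset_card_eq_precedes hf k (by omega)
    obtain ⟨y, hy, hmin⟩ := (R \ B).exists_min_image f
      (card_pos.1 (by rw [card_sdiff_of_subset hBR]; omega))
    refine ⟨insert y B, insert_subset (mem_sdiff.1 hy).1 hBR,
      by rw [card_insert_of_notMem (mem_sdiff.1 hy).2, hB], fun x hx z hz => ?_⟩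
    rw [sdiff_insert] at hz
    rcases mem_insert.1 hx with rfl | hx
    · exact lt_of_le_of_ne (hmin z (mem_of_mem_erase hz)) fun h =>
        ne_of_mem_erase hz (hf (mem_sdiff.1 (mem_of_mem_erase hz)).1 (mem_sdiff.1 hy).1 h.symm)
    · exact hprec x hx z (mem_of_mem_erase hz)


section Geometry

variable {𝕜 E : Type*} [Field 𝕜] [LinearOrder 𝕜] [IsStrictOrderedRing 𝕜]
  [AddCommGroup E] [Module 𝕜 E]

theorem exists_linearMap_injOn [DecidableEq E] (S : Finset E) :
    ∃ ℓ : E →ₗ[𝕜] 𝕜, Set.InjOn ℓ S := by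
  obtain ⟨ℓ, hℓ⟩ := Module.exists_dual_forall_apply_ne_zero (K := 𝕜)
    (fun p : S.offDiag => p.1.1 - p.1.2) fun p => sub_ne_zero.2 (mem_offDiag.1 p.2).2.2
  refine ⟨ℓ, fun x hx y hy hxy => by_contra fun hne => ?_⟩
  exact hℓ ⟨(x, y), mem_offDiag.2 ⟨hx, hy, hne⟩⟩ (by simp [hxy])

theorem disjoint_convexHull_of_precedes {ℓ : E →ₗ[𝕜] 𝕜} {A B : Finset E}
    (h : Precedes ℓ A B) : Disjoint (convexHull 𝕜 (A : Set E)) (convexHull 𝕜 (B : Set E)) := by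
  have hA : convexHull 𝕜 (A : Set E) ⊆ ⋂ y ∈ B, {z | ℓ z < ℓ y} :=
    convexHull_min (fun x hx => Set.mem_iInter₂.2 fun y hy => h x hx y hy)
      (convex_iInter₂ fun y _ => convex_halfSpace_lt ℓ.isLinear _)
  have hB : convexHull 𝕜 (B : Set E) ⊆ ⋂ x ∈ convexHull 𝕜 (A : Set E), {z | ℓ x < ℓ z} :=
    convexHull_min (fun y hy => Set.mem_iInter₂.2 fun x hx => Set.mem_iInter₂.1 (hA hx) y hy)
      (convex_iInter₂ fun x _ => convex_halfSpace_gt ℓ.isLinear _)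
  exact Set.disjoint_left.2 fun z hzA hzB => lt_irrefl _ (Set.mem_iInter₂.1 (hB hzB) z hzA)

theorem exists_subset_convexHull_inter_convexHull_sdiff [FiniteDimensional 𝕜 E] [DecidableEq E]
    (G : Finset E) (hG : finrank 𝕜 E + 2 ≤ #G) :
    ∃ I ⊆ G, (convexHull 𝕜 (I : Set E) ∩ convexHull 𝕜 ((G \ I : Finset E) : Set E)).Nonempty := by
  have hdep : ¬AffineIndependent 𝕜 ((↑) : G → E) := fun hind => by
    have := hind.card_le_finrank_succ
    have := Submodule.finrank_le (vectorSpan 𝕜 (Set.range ((↑) : G → E)))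
    simp only [Fintype.card_coe] at *
    omega
  obtain ⟨I, hI⟩ := Convex.radon_partition hdep
  classical
  refine ⟨(univ.filter (· ∈ I)).map (Function.Embedding.subtype _),
    fun x hx => by obtain ⟨y, -, rfl⟩ := mem_map.1 hx; exact y.2, ?_⟩
  convert hI using 3 <;> ext x
  · simp
  · simp only [coe_sdiff, coe_map, Set.mem_sdiff, Set.mem_image]
    aesop

theorem exists_subset_convexHull_insert_sdiff_inter_nonempty [FiniteDimensional 𝕜 E]
    [DecidableEq E] {c : E} {F : Finset E} (hc : c ∉ F) (hF : finrank 𝕜 E + 1 ≤ #F) :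
    ∃ Q ⊆ F, (convexHull 𝕜 ((insert c (F \ Q) : Finset E) : Set E) ∩
      convexHull 𝕜 (Q : Set E)).Nonempty := by
  obtain ⟨I, hIG, hI⟩ := exists_subset_convexHull_inter_convexHull_sdiff (𝕜 := 𝕜) (insert c F)
    (by rw [card_insert_of_notMem hc]; omega)
  by_cases hcI : c ∈ I
  · have hQ : insert c (F \ (insert c F \ I)) = I := by
      ext x
      by_cases hx : x = c
      · simp [hx, hcI]
      · have := @hIG x
        simp only [mem_insert, hx, false_or, mem_sdiff, not_and, not_not] at this ⊢
        tauto
    refine ⟨insert c F \ I, fun x hx => ?_, by rw [hQ]; exact hI⟩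
    obtain ⟨hx, hxI⟩ := mem_sdiff.1 hx
    exact (mem_insert.1 hx).resolve_left (by rintro rfl; exact hxI hcI)
  · refine ⟨I, fun x hx => (mem_insert.1 (hIG hx)).resolve_left (by rintro rfl; exact hcI hx), ?_⟩
    rw [Set.inter_comm, ← insert_sdiff_of_notMem _ hcI]
    exact hI

end Geometry

namespace SimpleGraph

variable {V : Type*} [DecidableEq V] {T : SimpleGraph V}

theorem IsTree.eq_of_adj_of_rank_le [Fintype V] (hT : T.IsTree) {r : V} {par : V → V} {rank : V → ℕ}
    (hpar : ∀ x ≠ r, T.Adj x (par x) ∧ rank (par x) < rank x) {a b : V} (hab : T.Adj a b)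
    (hle : rank a ≤ rank b) : a = par b := by
  classical
  -- the `card V - 1` distinct edges `s(x, par x)` are all the edges of the tree
  set parentEdges := (univ.erase r).image fun x => s(x, par x)
  have hinj : Set.InjOn (fun x => s(x, par x)) (univ.erase r : Set V) := by
    intro x hx y hy hxy
    rcases Sym2.eq_iff.1 hxy with ⟨h, -⟩ | ⟨hx', hy'⟩
    · exact h
    · have hxr := (hpar x (by simpa using hx)).2
      have hyr := (hpar y (by simpa using hy)).2
      rw [hy'] at hxr
      rw [← hx'] at hyr
      omega
  have hsub : parentEdges ⊆ T.edgeFinset := by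
    simp only [parentEdges, image_subset_iff, mem_erase, mem_univ, and_true, mem_edgeFinset,
      mem_edgeSet]
    exact fun x hx => (hpar x hx).1
  have heq : parentEdges = T.edgeFinset := by
    refine eq_of_subset_of_card_le hsub ?_
    have := hT.card_edgeFinset
    rw [card_image_of_injOn hinj, card_erase_of_mem (mem_univ _), card_univ]
    omega
  obtain ⟨x, hx, hxab⟩ := mem_image.1 (heq ▸ mem_edgeFinset.2 hab : s(a, b) ∈ parentEdges)
  rcases Sym2.eq_iff.1 hxab with ⟨rfl, rfl⟩ | ⟨rfl, rfl⟩
  · have := (hpar x (ne_of_mem_erase hx)).2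
    omega
  · rfl

theorem IsAcyclic.not_adj_of_adj_of_adj (hT : T.IsAcyclic) {a b c : V} (hab : T.Adj a b)
    (hbc : T.Adj b c) : ¬T.Adj a c := fun hac =>
  hT.cliqueFree (n := 3) le_rfl {a, b, c} (is3Clique_triple_iff.2 ⟨hab, hac, hbc⟩)

def HeadClosed (T : SimpleGraph V) (R : Finset V → V → Prop) : Prop :=
  ∀ ⦃U h w⦄, R U h → w ∉ U → T.Adj h w → (∀ u ∈ U, T.Adj u w → u = h) →
    R (insert w U) h ∧ R (insert w U) w

theorem HeadClosed.union {R : Finset V → V → Prop} (hR : HeadClosed T R) {U L : Finset V}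
    {h : V} (hU : R U h) (hLU : Disjoint L U) (hadj : ∀ w ∈ L, T.Adj h w)
    (huniq : ∀ w ∈ L, ∀ u ∈ U ∪ L, T.Adj u w → u = h) : R (U ∪ L) h := by
  induction L using Finset.induction_on with
  | empty => simpa
  | insert w L hw ih =>
    have hsub : U ∪ L ⊆ U ∪ insert w L := union_subset_union_right (subset_insert _ _)
    have hUL := ih (disjoint_of_subset_left (subset_insert _ _) hLU)
      (fun x hx => hadj x (mem_insert_of_mem hx))
      fun x hx u hu => huniq x (mem_insert_of_mem hx) u (hsub hu)
    have hwUL : w ∉ U ∪ L := by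
      simp only [mem_union, not_or]
      exact ⟨Finset.disjoint_left.1 hLU (mem_insert_self _ _), hw⟩
    rw [union_insert]
    exact (hR hUL hwUL (hadj w (mem_insert_self _ _))
      fun u hu => huniq w (mem_insert_self _ _) u (hsub hu)).1

section Spine

variable {m : ℕ} {v : Fin m → V} {σ : V → Fin m}

-- The caterpillar is built in increasing rank: `v 0`, its leaves, `v 1`, its leaves, ...
def spineRank (v : Fin m → V) (σ : V → Fin m) (x : V) : ℕ :=
  if ∃ i, v i = x then 2 * σ x else 2 * σ x + 1

theorem spineRank_lt (x : V) : spineRank v σ x < 2 * m := by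
  have := (σ x).2
  unfold spineRank
  split_ifs <;> omega

variable (hσ : ∀ x, v (σ x) = x ∨ (∀ i, v i ≠ x) ∧ T.Adj (v (σ x)) x)
include hσ

theorem eq_of_spineRank_eq_two_mul {x : V} {i : Fin m} (hx : spineRank v σ x = 2 * i) :
    x = v i := by
  unfold spineRank at hx
  split_ifs at hx with hsp
  · rcases hσ x with h | ⟨h, -⟩
    · rw [← h, Fin.ext (by omega : (σ x : ℕ) = i)]
    · obtain ⟨j, rfl⟩ := hsp; exact absurd rfl (h j)
  · omega

theorem adj_of_spineRank_eq_two_mul_add_one {x : V} {i : Fin m}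
    (hx : spineRank v σ x = 2 * i + 1) : T.Adj (v i) x := by
  unfold spineRank at hx
  split_ifs at hx with hsp
  · omega
  · rcases hσ x with h | ⟨-, h⟩
    · exact absurd ⟨σ x, h⟩ hsp
    · rwa [← Fin.ext (by omega : (σ x : ℕ) = i)]

variable (hv : Function.Injective v)
include hv

theorem spineRank_spine (i : Fin m) :
    spineRank v σ (v i) = 2 * i := by
  have : σ (v i) = i := by
    rcases hσ (v i) with h | ⟨h, -⟩
    · exact hv h
    · exact absurd rfl (h i)
  simp [spineRank, this]

variable (hpath : ∀ (i : Fin m) (h : (i : ℕ) + 1 < m), T.Adj (v i) (v ⟨i + 1, h⟩))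
include hpath

theorem exists_adj_spineRank_lt {x : V} (hx : spineRank v σ x ≠ 0) : ∃ y, T.Adj x y ∧ spineRank v σ y < spineRank v σ x := by
  obtain ⟨i, hi | hi⟩ : ∃ i : Fin m, spineRank v σ x = 2 * i ∨ spineRank v σ x = 2 * i + 1 :=
    ⟨σ x, by rw [spineRank]; split_ifs <;> simp⟩
  · obtain ⟨j, hj⟩ := Nat.exists_eq_succ_of_ne_zero (by omega : (i : ℕ) ≠ 0)
    have hprev : T.Adj (v ⟨j, by omega⟩) (v ⟨j + 1, by omega⟩) := hpath ⟨j, by omega⟩ _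
    rw [show (⟨j + 1, _⟩ : Fin m) = i from Fin.ext hj.symm,
      ← eq_of_spineRank_eq_two_mul hσ hi] at hprev
    exact ⟨_, hprev.symm, by rw [spineRank_spine hσ hv, hi]; simp only; omega⟩
  · exact ⟨v i, (adj_of_spineRank_eq_two_mul_add_one hσ hi).symm,
      by rw [spineRank_spine hσ hv, hi]; omega⟩

variable [Fintype V] (hT : T.IsTree)
include hT

theorem eq_of_adj_of_spineRank_le {u u' w : V} (hu : T.Adj u w) (hu' : T.Adj u' w)
    (hle : spineRank v σ u ≤ spineRank v σ w) (hle' : spineRank v σ u' ≤ spineRank v σ w) :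
    u = u' := by
  have hm : 0 < m := (σ u).pos
  have hdesc : ∀ x ≠ v ⟨0, hm⟩, ∃ y, T.Adj x y ∧ spineRank v σ y < spineRank v σ x :=
    fun x hx => exists_adj_spineRank_lt hσ hv hpath fun h0 =>
      hx (eq_of_spineRank_eq_two_mul hσ (i := ⟨0, hm⟩) h0)
  choose! par hpar using hdesc
  exact (hT.eq_of_adj_of_rank_le hpar hu hle).trans (hT.eq_of_adj_of_rank_le hpar hu' hle').symm

variable {R : Finset V → V → Prop} (hR : HeadClosed T R)
include hR

theorem HeadClosed.add_leaves {i : Fin m} (hRi : R (univ.filter (spineRank v σ · ≤ 2 * i)) (v i)) :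
    R (univ.filter (spineRank v σ · ≤ 2 * i + 1)) (v i) := by
  set L := univ.filter (spineRank v σ · = 2 * i + 1)
  have hleaf : ∀ w ∈ L, T.Adj (v i) w := fun w hw =>
    adj_of_spineRank_eq_two_mul_add_one hσ (mem_filter.1 hw).2
  have := hR.union hRi (disjoint_filter.2 fun x _ h1 h2 => by omega) hleaf
    fun w hw u hu huw => by
      have hwr := (mem_filter.1 hw).2
      refine eq_of_adj_of_spineRank_le hσ hv hpath hT huw (hleaf w hw) ?_
        (by rw [spineRank_spine hσ hv]; omega)
      simp only [mem_union, mem_filter, mem_univ, true_and] at hu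
      omega
  convert this using 2
  ext x
  simp only [mem_filter, mem_univ, true_and, mem_union]
  omega

theorem HeadClosed.add_spine {i : ℕ} (h : i + 1 < m)
    (hRi : R (univ.filter (spineRank v σ · ≤ 2 * i + 1)) (v ⟨i, by omega⟩)) :
    R (univ.filter (spineRank v σ · ≤ 2 * (i + 1))) (v ⟨i + 1, h⟩) := by
  have hvi : spineRank v σ (v ⟨i + 1, h⟩) = 2 * (i + 1) := spineRank_spine hσ hv _
  have hadj : T.Adj (v ⟨i, by omega⟩) (v ⟨i + 1, h⟩) := hpath ⟨i, by omega⟩ h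
  have := (hR hRi (by simp only [mem_filter, mem_univ, true_and, hvi]; omega) hadj
    fun u hu huw => eq_of_adj_of_spineRank_le hσ hv hpath hT huw hadj
      (by have := (mem_filter.1 hu).2; omega)
      (by rw [spineRank_spine hσ hv, hvi]; simp only; omega)).2
  convert this using 2
  ext x
  simp only [mem_filter, mem_univ, true_and, mem_insert]
  refine ⟨fun hx => ?_, by rintro (rfl | hx) <;> omega⟩
  by_cases hx' : spineRank v σ x = 2 * (i + 1)
  · exact .inl (eq_of_spineRank_eq_two_mul hσ (i := ⟨i + 1, h⟩) hx')
  · exact .inr (by omega)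

theorem HeadClosed.exists_univ (hinit : ∀ r, R {r} r) : ∃ h, R univ h := by
  obtain ⟨x₀⟩ := hT.connected.nonempty
  have hm : 0 < m := (σ x₀).pos
  have hspine : ∀ i (hi : i < m), R (univ.filter (spineRank v σ · ≤ 2 * i)) (v ⟨i, hi⟩) := by
    intro i
    induction i with
    | zero =>
      intro hi
      convert hinit (v ⟨0, hi⟩)
      ext x
      simp only [mem_filter, mem_univ, true_and, mem_singleton]
      exact ⟨fun hx => eq_of_spineRank_eq_two_mul hσ (i := ⟨0, hi⟩) (by simp only; omega),
        fun hx => by rw [hx, spineRank_spine hσ hv]⟩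
    | succ i ih =>
      exact fun hi => hR.add_spine hσ hv hpath hT hi
        (hR.add_leaves hσ hv hpath hT (i := ⟨i, by omega⟩) (ih (by omega)))
  refine ⟨v ⟨m - 1, by omega⟩, ?_⟩
  have hlast := hR.add_leaves hσ hv hpath hT (i := ⟨m - 1, by omega⟩) (hspine (m - 1) (by omega))
  convert hlast
  ext x
  have : spineRank v σ x < 2 * m := spineRank_lt x
  simp only [mem_univ, mem_filter, true_and, true_iff]
  omega

end Spine

end SimpleGraph

theorem IsCaterpillar.exists_univ_of_headClosed {n : ℕ} {T : SimpleGraph (Fin n)}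
    (hT : IsCaterpillar T) {R : Finset (Fin n) → Fin n → Prop} (hR : T.HeadClosed R)
    (hinit : ∀ r, R {r} r) : ∃ h, R univ h := by
  obtain ⟨hTree, m, v, hv, hpath, hcov⟩ := hT
  have : ∀ x, ∃ i, v i = x ∨ (∀ j, v j ≠ x) ∧ T.Adj (v i) x := fun x => by
    by_cases hx : ∃ i, v i = x
    · obtain ⟨i, hi⟩ := hx
      exact ⟨i, .inl hi⟩
    · obtain ⟨i, hi⟩ := (hcov x).resolve_left hx
      exact ⟨i, .inr ⟨fun j hj => hx ⟨j, hj⟩, hi⟩⟩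
  choose σ hσ using this
  exact hR.exists_univ hσ hv hpath hTree hinit

section ExtendParts

variable {E V : Type*} [DecidableEq E] [DecidableEq V] {P : V → Finset E} {h w : V}
  {B Q : Finset E}

def extendParts (P : V → Finset E) (h w : V) (B Q : Finset E) (u : V) : Finset E :=
  P u ∪ if u = w then Q else if u = h then B \ Q else ∅

theorem extendParts_of_ne {u : V} (huh : u ≠ h) (huw : u ≠ w) :
    extendParts P h w B Q u = P u := by
  simp [extendParts, huh, huw]

theorem biUnion_extendParts [Fintype V] (hhw : h ≠ w) (hQB : Q ⊆ B) :
    univ.biUnion (extendParts P h w B Q) = univ.biUnion P ∪ B := by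
  ext x
  simp only [extendParts, mem_biUnion, mem_univ, true_and, mem_union]
  constructor
  · rintro ⟨u, hu | hu⟩
    · exact .inl ⟨u, hu⟩
    · split_ifs at hu
      exacts [.inr (hQB hu), .inr (mem_sdiff.1 hu).1, absurd hu (notMem_empty x)]
  · rintro (⟨u, hu⟩ | hx)
    · exact ⟨u, .inl hu⟩
    · by_cases hxQ : x ∈ Q
      · exact ⟨w, .inr (by simpa using hxQ)⟩
      · exact ⟨h, .inr (by simp [hhw, hx, hxQ])⟩

theorem extendParts_nonempty_iff (hPh : (P h).Nonempty) (hQ : Q.Nonempty) {u : V} :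
    (extendParts P h w B Q u).Nonempty ↔ (P u).Nonempty ∨ u = w := by
  by_cases huw : u = w
  · simp [extendParts, huw, hQ]
  · by_cases huh : u = h
    · subst huh; simp [extendParts, huw, hPh]
    · simp [extendParts, huw, huh]

theorem pairwise_disjoint_extendParts (hP : Pairwise (Disjoint on P))
    (hPB : ∀ u, Disjoint (P u) B) (hQB : Q ⊆ B) :
    Pairwise (Disjoint on extendParts P h w B Q) := by
  have hXB : ∀ u, (if u = w then Q else if u = h then B \ Q else ∅) ⊆ B := fun u => by
    split_ifs
    exacts [hQB, sdiff_subset, empty_subset _]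
  intro a b hab
  simp only [onFun, extendParts, disjoint_union_left, disjoint_union_right]
  refine ⟨⟨hP hab, disjoint_of_subset_left (hXB a) (hPB b).symm⟩,
    disjoint_of_subset_right (hXB b) (hPB a), ?_⟩
  split_ifs <;> first | subst_vars; contradiction | simp [disjoint_sdiff, sdiff_disjoint]

end ExtendParts

section Realization

variable {𝕜 E V : Type*} [Field 𝕜] [LinearOrder 𝕜] [AddCommGroup E] [Module 𝕜 E]

-- The part of a head may still grow by points `ℓ`-above all used ones without meeting the hulls
-- of the parts of its non-neighbours.
def IsHead (T : SimpleGraph V) (ℓ : E →ₗ[𝕜] 𝕜) (P : V → Finset E) (h : V) : Prop :=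
  ∀ ⦃b⦄, b ≠ h → ¬T.Adj h b → Precedes ℓ (P b) (P h)

theorem disjoint_convexHull_of_isHead [IsStrictOrderedRing 𝕜] {T : SimpleGraph V}
    {ℓ : E →ₗ[𝕜] 𝕜} {P P' : V → Finset E} {h w : V}
    (hP : ∀ ⦃a b⦄, a ≠ b → ¬T.Adj a b →
      Disjoint (convexHull 𝕜 (P a : Set E)) (convexHull 𝕜 (P b : Set E)))
    (hh : IsHead T ℓ P' h) (hw : IsHead T ℓ P' w) (hP' : ∀ u, u ≠ h → u ≠ w → P' u = P u)
    {a b : V} (hab : a ≠ b) (hnadj : ¬T.Adj a b) :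
    Disjoint (convexHull 𝕜 (P' a : Set E)) (convexHull 𝕜 (P' b : Set E)) := by
  have key : ∀ {x y}, x ≠ y → ¬T.Adj x y → x = h ∨ x = w →
      Disjoint (convexHull 𝕜 (P' y : Set E)) (convexHull 𝕜 (P' x : Set E)) := by
    rintro x y hxy hnadj (rfl | rfl)
    exacts [disjoint_convexHull_of_precedes (hh hxy.symm hnadj),
      disjoint_convexHull_of_precedes (hw hxy.symm hnadj)]
  by_cases ha : a = h ∨ a = w
  · exact (key hab hnadj ha).symm
  by_cases hb : b = h ∨ b = w
  · exact key hab.symm (fun h' => hnadj h'.symm) hb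
  push Not at ha hb
  rw [hP' a ha.1 ha.2, hP' b hb.1 hb.2]
  exact hP hab hnadj

variable [DecidableEq E] [Fintype V]

structure IsPartialRealization (T : SimpleGraph V) (ℓ : E →ₗ[𝕜] 𝕜) (S : Finset E)
    (U : Finset V) (P : V → Finset E) : Prop where
  nonempty_iff : ∀ u, (P u).Nonempty ↔ u ∈ U
  pairwise_disjoint : Pairwise (Disjoint on P)
  inter_nonempty_of_adj : ∀ ⦃a b⦄, T.Adj a b → a ∈ U → b ∈ U →
    (convexHull 𝕜 (P a : Set E) ∩ convexHull 𝕜 (P b : Set E)).Nonempty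
  disjoint_of_not_adj : ∀ ⦃a b⦄, a ≠ b → ¬T.Adj a b →
    Disjoint (convexHull 𝕜 (P a : Set E)) (convexHull 𝕜 (P b : Set E))
  biUnion_subset : univ.biUnion P ⊆ S
  precedes_rest : Precedes ℓ (univ.biUnion P) (S \ univ.biUnion P)
  card_rest : #(S \ univ.biUnion P) = (finrank 𝕜 E + 1) * (Fintype.card V - #U)

variable {T : SimpleGraph V} {ℓ : E →ₗ[𝕜] 𝕜} {S : Finset E} {U : Finset V} {P : V → Finset E}
  {h w : V} {B Q : Finset E}

section Step

variable [DecidableEq V] (hP : IsPartialRealization T ℓ S U P) (hhU : h ∈ U) (hw : w ∉ U)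
  (hhw : T.Adj h w) (hBS : B ⊆ S \ univ.biUnion P) (hQB : Q ⊆ B)
include hP hhU hw hhw hBS hQB

theorem IsPartialRealization.isHead_extendParts (hhead : IsHead T ℓ P h) :
    IsHead T ℓ (extendParts P h w B Q) h ∧ IsHead T ℓ (extendParts P h w B Q) w := by
  have hne : h ≠ w := fun hhw' => hw (hhw' ▸ hhU)
  have hPw : P w = ∅ := not_nonempty_iff_eq_empty.1 fun h' => hw ((hP.nonempty_iff w).1 h')
  have hPB : ∀ u, Precedes ℓ (P u) B := fun u =>
    (hP.precedes_rest.mono (subset_biUnion_of_mem P (mem_univ u)) hBS)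
  refine ⟨fun b hbh hnadj => ?_, fun b hbw hnadj => ?_⟩
  · have hbw : b ≠ w := by rintro rfl; exact hnadj hhw
    rw [extendParts_of_ne hbh hbw]
    simp only [extendParts, if_neg hne]
    exact (hhead hbh hnadj).union_right ((hPB b).mono subset_rfl sdiff_subset)
  · have hbh : b ≠ h := by rintro rfl; exact hnadj hhw.symm
    rw [extendParts_of_ne hbh hbw]
    simp only [extendParts, hPw, empty_union]
    exact (hPB b).mono subset_rfl hQB

theorem IsPartialRealization.insert [IsStrictOrderedRing 𝕜] (hhead : IsHead T ℓ P h)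
    (huniq : ∀ u ∈ U, T.Adj u w → u = h) (hB : Precedes ℓ B ((S \ univ.biUnion P) \ B))
    (hBcard : #B = finrank 𝕜 E + 1) {c : E} (hc : c ∈ P h)
    (hQ : (convexHull 𝕜 ((insert c (B \ Q) : Finset E) : Set E) ∩
      convexHull 𝕜 (Q : Set E)).Nonempty) :
    IsPartialRealization T ℓ S (insert w U) (extendParts P h w B Q) := by
  have hne : h ≠ w := fun hhw' => hw (hhw' ▸ hhU)
  have hQne : Q.Nonempty := by
    simpa using (convexHull_nonempty_iff (𝕜 := 𝕜)).1 (hQ.mono Set.inter_subset_right)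
  have hrest : S \ (univ.biUnion P ∪ B) = (S \ univ.biUnion P) \ B := sdiff_sdiff_left.symm
  have hheads := hP.isHead_extendParts hhU hw hhw hBS hQB hhead
  have hedge : (convexHull 𝕜 (extendParts P h w B Q h : Set E) ∩
      convexHull 𝕜 (extendParts P h w B Q w : Set E)).Nonempty := by
    refine hQ.mono (Set.inter_subset_inter (convexHull_mono ?_) (convexHull_mono ?_))
    · simp only [extendParts, if_neg hne, coe_subset]
      exact insert_subset (mem_union_left _ hc) subset_union_right
    · simp [extendParts]
  refine ⟨fun u => ?_, pairwise_disjoint_extendParts hP.pairwise_disjoint (fun u =>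
      disjoint_of_subset_left (subset_biUnion_of_mem P (mem_univ u))
        (disjoint_of_subset_right hBS disjoint_sdiff)) hQB,
    fun a b hadj ha hb => ?_, fun a b hab hnadj => ?_, ?_, ?_, ?_⟩
  · rw [extendParts_nonempty_iff ⟨c, hc⟩ hQne, hP.nonempty_iff, mem_insert, or_comm]
  · rcases mem_insert.1 ha with rfl | haU <;> rcases mem_insert.1 hb with rfl | hbU
    · exact absurd hadj (T.irrefl)
    · rw [huniq b hbU hadj.symm, Set.inter_comm]; exact hedge
    · rw [huniq a haU hadj]; exact hedge
    · exact (hP.inter_nonempty_of_adj hadj haU hbU).mono (Set.inter_subset_inter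
        (convexHull_mono subset_union_left) (convexHull_mono subset_union_left))
  · exact disjoint_convexHull_of_isHead hP.disjoint_of_not_adj hheads.1 hheads.2
      (fun u huh huw => extendParts_of_ne huh huw) hab hnadj
  · rw [biUnion_extendParts hne hQB]
    exact union_subset hP.biUnion_subset fun x hx => (mem_sdiff.1 (hBS hx)).1
  · rw [biUnion_extendParts hne hQB, hrest]
    exact (hP.precedes_rest.mono subset_rfl sdiff_subset).union_left hB
  · rw [biUnion_extendParts hne hQB, hrest, card_sdiff_of_subset hBS,
      hP.card_rest, hBcard, card_insert_of_notMem hw, ← Nat.mul_sub_one, Nat.sub_sub]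

end Step

theorem exists_isPartialRealization_singleton [DecidableEq V] (hℓ : Set.InjOn ℓ S)
    (hS : (finrank 𝕜 E + 1) * (Fintype.card V - 1) < #S) (r : V) :
    ∃ P, IsPartialRealization T ℓ S {r} P ∧ IsHead T ℓ P r := by
  obtain ⟨B, hBS, hBcard, hB⟩ := exists_subset_card_eq_precedes hℓ
    (#S - (finrank 𝕜 E + 1) * (Fintype.card V - 1)) (Nat.sub_le _ _)
  have hunion : univ.biUnion (fun u => if u = r then B else ∅) = B := by
    ext x
    simp only [mem_biUnion, mem_univ, true_and]
    exact ⟨fun ⟨u, hu⟩ => by split_ifs at hu; exacts [hu, absurd hu (notMem_empty x)],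
      fun hx => ⟨r, by simpa using hx⟩⟩
  have hempty : ∀ u ≠ r, convexHull 𝕜 ((if u = r then B else ∅ : Finset E) : Set E) = ∅ :=
    fun u hu => by simp [hu]
  refine ⟨fun u => if u = r then B else ∅, ⟨fun u => ?_, fun a b hab => ?_,
    fun a b hab ha hb => ?_, fun a b hab _ => ?_, ?_, ?_, ?_⟩, fun b hb _ => ?_⟩
  · by_cases hu : u = r
    · simp only [hu, ↓reduceIte, ← card_pos, hBcard, tsub_pos_iff_lt, mem_singleton, iff_true]
      exact hS
    · simp [hu]
  · by_cases ha : a = r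
    · simp [onFun, ha, Ne.symm (ha ▸ hab)]
    · simp [onFun, ha]
  · rw [mem_singleton] at ha hb
    exact absurd (ha ▸ hb ▸ hab) (T.irrefl)
  · by_cases ha : a = r
    · rw [hempty b (ha ▸ hab.symm)]; exact Set.disjoint_empty _
    · rw [hempty a ha]; exact Set.empty_disjoint _
  · rw [hunion]; exact hBS
  · rw [hunion]; exact hB
  · rw [hunion, card_sdiff_of_subset hBS, hBcard, card_singleton]; omega
  · simp [Precedes, hb]

theorem headClosed_isPartialRealization [IsStrictOrderedRing 𝕜] [DecidableEq V]
    [FiniteDimensional 𝕜 E] (hℓ : Set.InjOn ℓ S) :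
    T.HeadClosed fun U h => h ∈ U ∧ ∃ P, IsPartialRealization T ℓ S U P ∧ IsHead T ℓ P h := by
  rintro U h w ⟨hhU, P, hP, hhead⟩ hw hhw huniq
  have hU : #U < Fintype.card V := card_lt_univ_of_notMem hw
  obtain ⟨B, hBS, hBcard, hB⟩ := exists_subset_card_eq_precedes (hℓ.mono sdiff_subset)
    (finrank 𝕜 E + 1) (by rw [hP.card_rest]; exact Nat.le_mul_of_pos_right _ (by omega))
  obtain ⟨c, hc⟩ := (hP.nonempty_iff h).2 hhU
  have hcB : c ∉ B := fun hcB => (mem_sdiff.1 (hBS hcB)).2 (mem_biUnion.2 ⟨h, mem_univ _, hc⟩)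
  obtain ⟨Q, hQB, hQ⟩ := exists_subset_convexHull_insert_sdiff_inter_nonempty hcB hBcard.ge
  have hP' := hP.insert hhU hw hhw hBS hQB hhead huniq hB hBcard hc hQ
  have hheads := hP.isHead_extendParts hhU hw hhw hBS hQB hhead
  exact ⟨⟨mem_insert_of_mem hhU, _, hP', hheads.1⟩, ⟨mem_insert_self _ _, _, hP', hheads.2⟩⟩

theorem IsPartialRealization.biUnion_eq (hP : IsPartialRealization T ℓ S univ P) :
    univ.biUnion P = S := by
  have := hP.card_rest
  rw [card_univ, Nat.sub_self, mul_zero, card_eq_zero, sdiff_eq_empty_iff_subset] at this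
  exact hP.biUnion_subset.antisymm this

end Realization

theorem caterpillar_tverberg_general
    {d n : ℕ}
    (T : SimpleGraph (Fin n)) (hT : IsCaterpillar T)
    (S : Finset (Fin d → ℝ)) (hcard : (d + 1) * (n - 1) + 1 ≤ S.card) :
    ∃ P : Fin n → Finset (Fin d → ℝ),
      (∀ i, (P i).Nonempty) ∧
      (∀ i j, i ≠ j → Disjoint (P i) (P j)) ∧
      S = Finset.univ.biUnion P ∧
      (∀ i j, i ≠ j →
        ((convexHull ℝ (P i : Set (Fin d → ℝ)) ∩
          convexHull ℝ (P j : Set (Fin d → ℝ))).Nonempty ↔ T.Adj i j)) ∧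
      (∀ i j k, i ≠ j → j ≠ k → i ≠ k →
        convexHull ℝ (P i : Set (Fin d → ℝ)) ∩
          convexHull ℝ (P j : Set (Fin d → ℝ)) ∩
          convexHull ℝ (P k : Set (Fin d → ℝ)) = ∅) := by
  classical
  obtain ⟨ℓ, hℓ⟩ := exists_linearMap_injOn (𝕜 := ℝ) S
  obtain ⟨-, -, P, hP, -⟩ := hT.exists_univ_of_headClosed (headClosed_isPartialRealization hℓ)
    fun r => ⟨mem_singleton_self r, exists_isPartialRealization_singleton hℓ
      (by rw [Module.finrank_fin_fun, Fintype.card_fin]; omega) r⟩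
  have hmeet : ∀ i j, i ≠ j → ¬T.Adj i j → convexHull ℝ (P i : Set (Fin d → ℝ)) ∩
      convexHull ℝ (P j : Set (Fin d → ℝ)) = ∅ := fun i j hij hnadj =>
    Set.disjoint_iff_inter_eq_empty.1 (hP.disjoint_of_not_adj hij hnadj)
  refine ⟨P, fun i => (hP.nonempty_iff i).2 (mem_univ i), fun i j hij => hP.pairwise_disjoint hij,
    hP.biUnion_eq.symm, fun i j hij => ⟨fun hne => ?_, fun hadj => ?_⟩, fun i j k hij hjk hik => ?_⟩
  · by_contra hnadj
    exact hne.ne_empty (hmeet i j hij hnadj)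
  · exact hP.inter_nonempty_of_adj hadj (mem_univ _) (mem_univ _)
  · by_cases hadj : T.Adj i j
    · by_cases hadj' : T.Adj j k
      · rw [Set.inter_right_comm, hmeet i k hik (hT.1.isAcyclic.not_adj_of_adj_of_adj hadj hadj'),
          Set.empty_inter]
      · rw [Set.inter_assoc, hmeet j k hjk hadj', Set.inter_empty]
    · rw [hmeet i j hij hadj, Set.empty_inter]

/-- Every caterpillar tree `T` on `n` nodes is partition induced on every set
of at least `(d+1)(n-1)+1` points in general position in `ℝ^d`; i.e. `Tv(T,d) ≤ (d+1)(n-1)+1`. -/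
theorem caterpillar_tverberg
    {d n : ℕ} (hd : 1 ≤ d) (hn : 1 ≤ n)
    (T : SimpleGraph (Fin n)) (hT : IsCaterpillar T)
    (S : Finset (Fin d → ℝ)) (hcard : (d + 1) * (n - 1) + 1 ≤ S.card)
    -- general position: any `d+1` points of `S` are affinely independent
    (hgen : ∀ W : Finset (Fin d → ℝ), W ⊆ S → W.card = d + 1 →
      AffineIndependent ℝ (fun x : W => (x : Fin d → ℝ))) :
    ∃ P : Fin n → Finset (Fin d → ℝ),
      (∀ i, (P i).Nonempty) ∧
      (∀ i j, i ≠ j → Disjoint (P i) (P j)) ∧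
      S = Finset.univ.biUnion P ∧
      (∀ i j, i ≠ j →
        ((convexHull ℝ (P i : Set (Fin d → ℝ)) ∩
          convexHull ℝ (P j : Set (Fin d → ℝ))).Nonempty ↔ T.Adj i j)) ∧
      (∀ i j k, i ≠ j → j ≠ k → i ≠ k →
        convexHull ℝ (P i : Set (Fin d → ℝ)) ∩
          convexHull ℝ (P j : Set (Fin d → ℝ)) ∩
          convexHull ℝ (P k : Set (Fin d → ℝ)) = ∅) :=
  caterpillar_tverberg_general T hT S hcard
end

section
/- Let M be finite set of at least 4 points in ℝ² in general position. Then there exist two lines L₁, L₂ intersecting at a point p such that each of the four open regions determined by L₁ and L₂ contains at least ⌊|M|/4⌋ points of M (assuming no point of M lies on L₁ or L₂). -/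
/-!
Let `k = ⌊|M|/4⌋`. Both lines come from one construction. Given finite sets `A, B` with at least
`2k` points each, project them on the rotating direction `u(θ) = (cos θ, sin θ)` and take the
midrange of each (midpoint of the `k`-th smallest and `k`-th largest projection). Both midranges
depend continuously on `θ` and change sign under `θ ↦ θ + π`, so by the intermediate value
theorem they agree for some `θ`, at some value `t`. Each closed side of the line `u(θ) = t` then
holds at least `k` points of `A` and of `B`, and the line holds at most two points of `M`; tilting
it slightly about the midpoint of those two points sends them to opposite sides, which keeps `k`
points on each open side. Applied to `A = B = M` with `2k`, this gives `L₁`; applied to the two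
open sides of `L₁`, it gives `L₂`. The four quadrants are nonempty, so the lines are not parallel.
-/

open Finset Filter Topology Module

section OrderStat

variable {α : Type*} (S : Finset α) (f : α → ℝ)

/-- The `j`-th smallest value of `f` on `S`, counted with multiplicity and from `j = 1`, as the
least maximum of `f` over `j`-element subsets; it is `0` unless `1 ≤ j ≤ #S`. -/
noncomputable def orderStat (j : ℕ) : ℝ :=
  if h : 0 < j ∧ j ≤ #S then
    (S.powersetCard j).inf' (powersetCard_nonempty.2 h.2) fun T =>
      if hT : T.Nonempty then T.sup' hT f else 0
  else 0

noncomputable def midrange (k : ℕ) : ℝ :=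
  (orderStat S f k + orderStat S f (#S + 1 - k)) / 2

variable {S} {j : ℕ}

theorem card_filter_lt_orderStat (hj : 0 < j) (hjS : j ≤ #S) :
    #{x ∈ S | f x < orderStat S f j} < j := by
  by_contra! h
  obtain ⟨T, hTS, hT⟩ := exists_subset_card_eq h
  have hTne : T.Nonempty := card_pos.1 (by omega)
  have hle : orderStat S f j ≤ T.sup' hTne f := by
    rw [orderStat, dif_pos ⟨hj, hjS⟩]
    refine (inf'_le _ (mem_powersetCard.2 ⟨hTS.trans (filter_subset _ _), hT⟩)).trans ?_
    rw [dif_pos hTne]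
  obtain ⟨x, hx, hxT⟩ := exists_mem_eq_sup' hTne f
  exact (hle.trans_eq hxT).not_gt (mem_filter.1 (hTS hx)).2

theorem le_card_filter_le_orderStat (hj : 0 < j) (hjS : j ≤ #S) :
    j ≤ #{x ∈ S | f x ≤ orderStat S f j} := by
  obtain ⟨T, hT, hTeq⟩ := exists_mem_eq_inf' (powersetCard_nonempty.2 hjS) fun T =>
    if hT : T.Nonempty then T.sup' hT f else 0
  obtain ⟨hTS, hTcard⟩ := mem_powersetCard.1 hT
  have hTne : T.Nonempty := card_pos.1 (by omega)
  rw [dif_pos hTne] at hTeq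
  calc j = #T := hTcard.symm
    _ ≤ _ := card_le_card fun x hx => mem_filter.2 ⟨hTS hx, by
      rw [orderStat, dif_pos ⟨hj, hjS⟩, hTeq]
      exact le_sup' f hx⟩

theorem orderStat_eq_of_card {c : ℝ} (hlt : #{x ∈ S | f x < c} < j)
    (hle : j ≤ #{x ∈ S | f x ≤ c}) : orderStat S f j = c := by
  have hj : 0 < j := by omega
  have hjS : j ≤ #S := hle.trans (card_filter_le _ _)
  by_contra hne
  rcases lt_or_gt_of_ne hne with h | h
  · have := card_le_card (monotone_filter_right S fun x _ (hx : f x ≤ orderStat S f j) =>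
      hx.trans_lt h)
    linarith [le_card_filter_le_orderStat f hj hjS]
  · have := card_le_card (monotone_filter_right S fun x _ (hx : f x ≤ c) => hx.trans_lt h)
    linarith [card_filter_lt_orderStat f hj hjS]

theorem orderStat_mono {j' : ℕ} (hj : 0 < j) (hjj' : j ≤ j') (hj'S : j' ≤ #S) :
    orderStat S f j ≤ orderStat S f j' := by
  by_contra! h
  have := card_le_card (monotone_filter_right S
    fun x _ (hx : f x ≤ orderStat S f j') => hx.trans_lt h)
  linarith [le_card_filter_le_orderStat f (hj.trans_le hjj') hj'S,
    card_filter_lt_orderStat f hj (hjj'.trans hj'S)]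

theorem card_filter_lt_add_card_filter_le (c : ℝ) :
    #{x ∈ S | f x < c} + #{x ∈ S | c ≤ f x} = #S := by
  simpa only [not_lt] using card_filter_add_card_filter_not (s := S) (fun x => f x < c)

theorem card_filter_le_add_card_filter_lt (c : ℝ) :
    #{x ∈ S | f x ≤ c} + #{x ∈ S | c < f x} = #S := by
  simpa only [not_le] using card_filter_add_card_filter_not (s := S) (fun x => f x ≤ c)

theorem orderStat_neg (hj : 0 < j) (hjS : j ≤ #S) :
    orderStat S (-f) j = -orderStat S f (#S + 1 - j) := by
  have hlt := card_filter_lt_orderStat (S := S) f (j := #S + 1 - j) (by omega) (by omega)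
  have hle := le_card_filter_le_orderStat (S := S) f (j := #S + 1 - j) (by omega) (by omega)
  have := card_filter_lt_add_card_filter_le (S := S) f (orderStat S f (#S + 1 - j))
  have := card_filter_le_add_card_filter_lt (S := S) f (orderStat S f (#S + 1 - j))
  apply orderStat_eq_of_card <;> simp only [Pi.neg_apply, neg_lt_neg_iff, neg_le_neg_iff] <;> omega

theorem continuous_orderStat {X : Type*} [TopologicalSpace X] {F : X → α → ℝ}
    (hF : ∀ x, Continuous fun θ => F θ x) (j : ℕ) :
    Continuous fun θ => orderStat S (F θ) j := by
  unfold orderStat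
  by_cases h : 0 < j ∧ j ≤ #S
  · simp only [dif_pos h]
    refine Continuous.finset_inf'_apply _ fun T _ => ?_
    by_cases hT : T.Nonempty
    · simp only [dif_pos hT]
      exact Continuous.finset_sup'_apply hT fun x _ => hF x
    · simp only [dif_neg hT]
      exact continuous_const
  · simp only [dif_neg h]
    exact continuous_const

variable {k : ℕ}

theorem midrange_neg (hk : 0 < k) (hkS : k ≤ #S) : midrange S (-f) k = -midrange S f k := by
  rw [midrange, midrange, orderStat_neg f hk hkS, orderStat_neg f (by omega) (by omega),
    show #S + 1 - (#S + 1 - k) = k by omega]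
  ring

theorem continuous_midrange {X : Type*} [TopologicalSpace X] {F : X → α → ℝ}
    (hF : ∀ x, Continuous fun θ => F θ x) (k : ℕ) :
    Continuous fun θ => midrange S (F θ) k :=
  ((continuous_orderStat hF k).add (continuous_orderStat hF _)).div_const 2

theorem card_filter_eq_and_le_midrange_of_orderStat_eq (hk : 0 < k) (hkS : 2 * k ≤ #S)
    (h : orderStat S f k = orderStat S f (#S + 1 - k)) :
    1 < #{x ∈ S | f x = midrange S f k} ∧ #S + 1 - k ≤ #{x ∈ S | f x ≤ midrange S f k} := by
  classical
  have hmid : midrange S f k = orderStat S f k := by rw [midrange, ← h]; ring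
  have hL := card_filter_lt_orderStat f hk (by omega : k ≤ #S)
  have hLE := le_card_filter_le_orderStat (S := S) f (j := #S + 1 - k) (by omega) (by omega)
  rw [← h, ← hmid] at hLE
  rw [← hmid] at hL
  have := card_union_le {x ∈ S | f x < midrange S f k} {x ∈ S | f x = midrange S f k}
  rw [← filter_or] at this
  simp only [← le_iff_lt_or_eq] at this
  exact ⟨by omega, hLE⟩

theorem le_card_filter_lt_of_midrange {f' : α → ℝ} {s : ℝ} (hk : 0 < k) (hkS : 2 * k ≤ #S)
    (hlt : ∀ x ∈ S, f x < midrange S f k → f' x < s)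
    (hon : ∀ x ∈ S, ∀ y ∈ S, f x = midrange S f k → f y = midrange S f k → x ≠ y →
      (f' x - s) * (f' y - s) < 0) :
    k ≤ #{x ∈ S | f' x < s} := by
  classical
  have hab : orderStat S f k ≤ orderStat S f (#S + 1 - k) :=
    orderStat_mono f hk (by omega) (by omega)
  rcases hab.lt_or_eq with hab | hab
  · calc k ≤ #{x ∈ S | f x ≤ orderStat S f k} := le_card_filter_le_orderStat f hk (by omega)
      _ ≤ #{x ∈ S | f x < midrange S f k} := card_le_card (monotone_filter_right S
          fun x _ (hx : f x ≤ _) => hx.trans_lt (by rw [midrange]; linarith))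
      _ ≤ _ := card_le_card (monotone_filter_right S hlt)
  obtain ⟨hE, hLE⟩ := card_filter_eq_and_le_midrange_of_orderStat_eq f hk hkS hab
  obtain ⟨x, hx, y, hy, hxy⟩ := one_lt_card.1 hE
  rw [mem_filter] at hx hy
  -- by `hon`, at most one point of the level `midrange S f k` ends up above `s`
  obtain ⟨z, hzS, hz, hzs⟩ : ∃ z ∈ S, f z = midrange S f k ∧ s < f' z := by
    rcases mul_neg_iff.1 (hon x hx.1 y hy.1 hx.2 hy.2 hxy) with h | h
    exacts [⟨x, hx.1, hx.2, by linarith [h.1]⟩, ⟨y, hy.1, hy.2, by linarith [h.2]⟩]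
  have hsub : {x ∈ S | f x ≤ midrange S f k}.erase z ⊆ {x ∈ S | f' x < s} := by
    intro w hw
    obtain ⟨hwz, hwS, hwt⟩ := by simpa only [mem_erase, mem_filter] using hw
    refine mem_filter.2 ⟨hwS, ?_⟩
    rcases hwt.lt_or_eq with hwt | hwt
    · exact hlt w hwS hwt
    · nlinarith [hon w hwS z hzS hwt hz hwz]
  have := card_le_card hsub
  rw [card_erase_of_mem (mem_filter.2 ⟨hzS, hz.le⟩)] at this
  omega

theorem le_card_filter_gt_of_midrange {f' : α → ℝ} {s : ℝ} (hk : 0 < k) (hkS : 2 * k ≤ #S)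
    (hgt : ∀ x ∈ S, midrange S f k < f x → s < f' x)
    (hon : ∀ x ∈ S, ∀ y ∈ S, f x = midrange S f k → f y = midrange S f k → x ≠ y →
      (f' x - s) * (f' y - s) < 0) :
    k ≤ #{x ∈ S | s < f' x} := by
  have hneg : midrange S (-f) k = -midrange S f k := midrange_neg f hk (by omega)
  have := le_card_filter_lt_of_midrange (-f) (f' := -f') (s := -s) hk hkS
    (fun x hx h => neg_lt_neg (hgt x hx (by rw [hneg, Pi.neg_apply] at h; linarith)))
    (fun x hx y hy hxt hyt hxy => by
      simp only [hneg, Pi.neg_apply, neg_inj] at hxt hyt ⊢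
      linarith [hon x hx y hy hxt hyt hxy])
  simpa only [Pi.neg_apply, neg_lt_neg_iff] using this

end OrderStat

section LinearAlgebra

variable {K V : Type*} [Field K] [AddCommGroup V] [Module K V]

theorem exists_apply_eq_apply_eq_of_linearIndependent {f g : V →ₗ[K] K}
    (hfg : LinearIndependent K ![f, g]) (t s : K) : ∃ p, f p = t ∧ g p = s := by
  suffices hsurj : Function.Surjective (f.prod g) by
    obtain ⟨p, hp⟩ := hsurj (t, s)
    exact ⟨p, congr_arg Prod.fst hp, congr_arg Prod.snd hp⟩
  rw [← LinearMap.range_eq_top]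
  by_contra hne
  obtain ⟨φ, hφ, hφf⟩ :=
    Submodule.exists_dual_map_eq_bot_of_lt_top (lt_top_iff_ne_top.2 hne) inferInstance
  have hcomb : φ (1, 0) • f + φ (0, 1) • g = 0 := by
    ext x
    have : φ (f x, g x) ∈ (LinearMap.range (f.prod g)).map φ :=
      Submodule.mem_map_of_mem (LinearMap.mem_range_self _ x)
    rw [hφf, Submodule.mem_bot] at this
    rw [show (f x, g x) = f x • ((1 : K), (0 : K)) + g x • ((0 : K), (1 : K)) by simp, map_add,
      map_smul, map_smul] at this
    simpa [mul_comm] using this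
  obtain ⟨h1, h2⟩ := LinearIndependent.pair_iff.1 hfg _ _ hcomb
  exact hφ (LinearMap.prod_ext (LinearMap.ext_ring h1) (LinearMap.ext_ring h2))

theorem collinear_of_forall_apply_eq [FiniteDimensional K V] (hV : finrank K V = 2)
    {g : V →ₗ[K] K} (hg : g ≠ 0) {s : Set V} {t : K} (hs : ∀ x ∈ s, g x = t) :
    Collinear K s := by
  have hker : finrank K (LinearMap.ker g) = 1 := by
    have := Module.Dual.finrank_ker_add_one_of_ne_zero hg
    omega
  have hle : vectorSpan K s ≤ LinearMap.ker g := by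
    rw [vectorSpan_def, Submodule.span_le]
    rintro _ ⟨x, hx, y, hy, rfl⟩
    simp [hs x hx, hs y hy]
  rw [collinear_iff_finrank_le_one, ← hker]
  exact Submodule.finrank_mono hle

theorem card_filter_apply_eq_le_two [FiniteDimensional K V] [DecidableEq K]
    (hV : finrank K V = 2) {M : Finset V}
    (hgen : ∀ x ∈ M, ∀ y ∈ M, ∀ z ∈ M, x ≠ y → y ≠ z → x ≠ z →
      ¬ Collinear K ({x, y, z} : Set V))
    {g : V →ₗ[K] K} (hg : g ≠ 0) (t : K) : #{x ∈ M | g x = t} ≤ 2 := by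
  classical
  by_contra! h
  obtain ⟨T, hTM, hT⟩ := exists_subset_card_eq (show 3 ≤ #{x ∈ M | g x = t} by omega)
  obtain ⟨x, y, z, hxy, hxz, hyz, rfl⟩ := card_eq_three.1 hT
  have hon : ∀ w ∈ ({x, y, z} : Finset V), w ∈ M ∧ g w = t := fun w hw =>
    mem_filter.1 (hTM hw)
  refine hgen x (hon x (by simp)).1 y (hon y (by simp)).1 z (hon z (by simp)).1 hxy hyz hxz
    (collinear_of_forall_apply_eq hV hg fun w hw => (hon w (by simpa using hw)).2)

variable [LinearOrder K] [IsStrictOrderedRing K]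

theorem linearIndependent_pair_of_quadrants {f g : V →ₗ[K] K} {t s : K}
    (h₁ : ∃ x, f x < t ∧ g x < s) (h₂ : ∃ x, f x < t ∧ s < g x)
    (h₃ : ∃ x, t < f x ∧ g x < s) (h₄ : ∃ x, t < f x ∧ s < g x) :
    LinearIndependent K ![f, g] := by
  obtain ⟨x₁, hf₁, hg₁⟩ := h₁
  obtain ⟨x₂, hf₂, hg₂⟩ := h₂
  obtain ⟨x₃, hf₃, hg₃⟩ := h₃
  obtain ⟨x₄, hf₄, hg₄⟩ := h₄
  refine LinearIndependent.pair_iff.2 fun a b hab => ?_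
  have e : ∀ x, a * f x + b * g x = 0 := fun x => by simpa using LinearMap.congr_fun hab x
  have ha : a * ((f x₄ - f x₁) * (g x₂ - g x₃) + (g x₄ - g x₁) * (f x₃ - f x₂)) = 0 := by
    linear_combination (g x₂ - g x₃) * (e x₄ - e x₁) + (g x₄ - g x₁) * (e x₃ - e x₂)
  have hpos : 0 < (f x₄ - f x₁) * (g x₂ - g x₃) + (g x₄ - g x₁) * (f x₃ - f x₂) := by
    apply add_pos <;> apply mul_pos <;> linarith
  obtain rfl : a = 0 := (mul_eq_zero.1 ha).resolve_right hpos.ne'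
  refine ⟨rfl, (mul_eq_zero.1 (?_ : b * (g x₄ - g x₁) = 0)).resolve_right (by linarith)⟩
  linear_combination e x₄ - e x₁

end LinearAlgebra

section Tilt

variable {V : Type*} [AddCommGroup V] [Module ℝ V]

theorem exists_affine_separation_of_card_le_two {E : Finset V} (hE : #E ≤ 2) :
    ∃ (h : V →ₗ[ℝ] ℝ) (r : ℝ), (∀ x ∈ E, h x ≠ r) ∧
      ∀ x ∈ E, ∀ y ∈ E, x ≠ y → (h x - r) * (h y - r) < 0 := by
  classical
  rcases hE.lt_or_eq with hE | hE
  · exact ⟨0, 1, by simp, fun x hx y hy hxy => absurd (card_le_one.1 (by omega) x hx y hy) hxy⟩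
  obtain ⟨a, b, hab, rfl⟩ := card_eq_two.1 hE
  obtain ⟨h, hh⟩ := Projective.exists_dual_ne_zero ℝ (sub_ne_zero.2 hab)
  rw [map_sub, sub_ne_zero] at hh
  refine ⟨h, (h a + h b) / 2, ?_, ?_⟩
  · simp only [mem_insert, mem_singleton]
    rintro x (rfl | rfl) hx <;> exact hh (by linarith)
  · simp only [mem_insert, mem_singleton]
    have := sq_pos_of_ne_zero (sub_ne_zero.2 hh)
    rintro x (rfl | rfl) y (rfl | rfl) hxy <;> first | exact absurd rfl hxy | nlinarith

theorem eventually_tilt (S : Finset V) (g h : V →ₗ[ℝ] ℝ) (t r : ℝ) :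
    ∀ᶠ ε in 𝓝 (0 : ℝ), ∀ x ∈ S, (g x < t → g x + ε * h x < t + ε * r) ∧
      (t < g x → t + ε * r < g x + ε * h x) := by
  refine (eventually_all_finset S).2 fun x _ => ?_
  refine (eventually_imp_distrib_left.2 fun hx => ?_).and
    (eventually_imp_distrib_left.2 fun hx => ?_)
  · exact ContinuousAt.eventually_lt (by fun_prop) (by fun_prop) (by simpa using hx)
  · exact ContinuousAt.eventually_lt (by fun_prop) (by fun_prop) (by simpa using hx)

theorem exists_tilt_of_card_filter_eq_le_two (M : Finset V) (g : V →ₗ[ℝ] ℝ) (t : ℝ)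
    (hM : #{x ∈ M | g x = t} ≤ 2) :
    ∃ (g' : V →ₗ[ℝ] ℝ) (s : ℝ), (∀ x ∈ M, g' x ≠ s) ∧
      (∀ x ∈ M, g x < t → g' x < s) ∧ (∀ x ∈ M, t < g x → s < g' x) ∧
      ∀ x ∈ M, ∀ y ∈ M, g x = t → g y = t → x ≠ y → (g' x - s) * (g' y - s) < 0 := by
  obtain ⟨h, r, hr, hsep⟩ := exists_affine_separation_of_card_le_two hM
  obtain ⟨ε, hε, hε0⟩ := ((eventually_tilt M g h t r).filter_mono nhdsWithin_le_nhds |>.and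
    (self_mem_nhdsWithin : ∀ᶠ ε in 𝓝[>] (0 : ℝ), 0 < ε)).exists
  have hon : ∀ x, g x = t → (g + ε • h) x - (t + ε * r) = ε * (h x - r) := fun x hx => by
    simp only [LinearMap.add_apply, LinearMap.smul_apply, smul_eq_mul, hx]
    ring
  refine ⟨g + ε • h, t + ε * r, fun x hx => ?_, fun x hx hxt => (hε x hx).1 hxt,
    fun x hx hxt => (hε x hx).2 hxt, fun x hx y hy hxt hyt hxy => ?_⟩
  · rcases lt_trichotomy (g x) t with hxt | hxt | hxt
    · exact ((hε x hx).1 hxt).ne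
    · rw [← sub_ne_zero, hon x hxt]
      exact mul_ne_zero hε0.ne' (sub_ne_zero.2 (hr x (mem_filter.2 ⟨hx, hxt⟩)))
    · exact ((hε x hx).2 hxt).ne'
  · rw [hon x hxt, hon y hyt, mul_mul_mul_comm]
    exact mul_neg_of_pos_of_neg (mul_pos hε0 hε0)
      (hsep x (mem_filter.2 ⟨hx, hxt⟩) y (mem_filter.2 ⟨hy, hyt⟩) hxy)

end Tilt

noncomputable def angleFunctional (θ : ℝ) : (Fin 2 → ℝ) →ₗ[ℝ] ℝ :=
  Real.cos θ • LinearMap.proj 0 + Real.sin θ • LinearMap.proj 1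

theorem angleFunctional_apply (θ : ℝ) (x : Fin 2 → ℝ) :
    angleFunctional θ x = Real.cos θ * x 0 + Real.sin θ * x 1 := rfl

theorem continuous_angleFunctional_apply (x : Fin 2 → ℝ) :
    Continuous fun θ => angleFunctional θ x := by
  simp only [angleFunctional_apply]
  fun_prop

theorem angleFunctional_pi : angleFunctional Real.pi = -angleFunctional 0 := by
  ext x
  simp [angleFunctional_apply]

theorem angleFunctional_ne_zero (θ : ℝ) : angleFunctional θ ≠ 0 := by
  intro h
  have h0 := LinearMap.congr_fun h (Pi.single 0 1)
  have h1 := LinearMap.congr_fun h (Pi.single 1 1)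
  simp [angleFunctional_apply] at h0 h1
  simpa [h0, h1] using Real.sin_sq_add_cos_sq θ

theorem exists_line_splitting_both {M A B : Finset (Fin 2 → ℝ)} {k : ℕ}
    (hM : ∀ g : (Fin 2 → ℝ) →ₗ[ℝ] ℝ, g ≠ 0 → ∀ t, #{x ∈ M | g x = t} ≤ 2)
    (hA : A ⊆ M) (hB : B ⊆ M) (hk : 0 < k) (hkA : 2 * k ≤ #A) (hkB : 2 * k ≤ #B) :
    ∃ (g : (Fin 2 → ℝ) →ₗ[ℝ] ℝ) (s : ℝ), (∀ x ∈ M, g x ≠ s) ∧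
      k ≤ #{x ∈ A | g x < s} ∧ k ≤ #{x ∈ A | s < g x} ∧
      k ≤ #{x ∈ B | g x < s} ∧ k ≤ #{x ∈ B | s < g x} := by
  have hcont (S : Finset (Fin 2 → ℝ)) : Continuous fun θ => midrange S (angleFunctional θ) k :=
    continuous_midrange continuous_angleFunctional_apply k
  have hpi : ⇑(angleFunctional Real.pi) = -⇑(angleFunctional 0) := by
    rw [angleFunctional_pi, LinearMap.coe_neg]
  have hA0 := midrange_neg (S := A) (angleFunctional 0) hk (by omega)
  have hB0 := midrange_neg (S := B) (angleFunctional 0) hk (by omega)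
  -- a half-turn negates both midranges, so their difference changes sign on `[0, π]`
  obtain ⟨θ, hθ⟩ : ∃ θ, midrange A (angleFunctional θ) k = midrange B (angleFunctional θ) k := by
    rcases le_total (midrange A (angleFunctional 0) k) (midrange B (angleFunctional 0) k)
      with h | h
    · exact intermediate_value_univ₂ (a := 0) (b := Real.pi) (hcont A) (hcont B) h
        (by rw [hpi, hA0, hB0]; linarith)
    · exact intermediate_value_univ₂ (a := Real.pi) (b := 0) (hcont A) (hcont B)
        (by rw [hpi, hA0, hB0]; linarith) h
  generalize ht : midrange A (angleFunctional θ) k = t at hθ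
  obtain ⟨g, s, hgM, hlt, hgt, hon⟩ := exists_tilt_of_card_filter_eq_le_two M (angleFunctional θ)
    t (hM _ (angleFunctional_ne_zero θ) t)
  have hsplit {S} (hS : S ⊆ M) (hkS : 2 * k ≤ #S) (hSt : midrange S (angleFunctional θ) k = t) :
      k ≤ #{x ∈ S | g x < s} ∧ k ≤ #{x ∈ S | s < g x} := by
    subst hSt
    exact ⟨le_card_filter_lt_of_midrange _ hk hkS (fun x hx => hlt x (hS hx))
        (fun x hx y hy => hon x (hS hx) y (hS hy)),
      le_card_filter_gt_of_midrange _ hk hkS (fun x hx => hgt x (hS hx))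
        (fun x hx y hy => hon x (hS hx) y (hS hy))⟩
  obtain ⟨hA₁, hA₂⟩ := hsplit hA hkA ht
  obtain ⟨hB₁, hB₂⟩ := hsplit hB hkB hθ.symm
  exact ⟨g, s, hgM, hA₁, hA₂, hB₁, hB₂⟩

/-- For a finite set `M` of at least 4 points in general position in the plane,
there are two (non-parallel) lines meeting at a point `p`, avoiding `M`, such that each of
the four open regions they determine contains at least `⌊|M|/4⌋` points of `M`. -/
theorem four_quadrants
    (M : Finset (Fin 2 → ℝ)) (hM : 4 ≤ M.card)
    -- general position: no three points collinear
    (hgen : ∀ x ∈ M, ∀ y ∈ M, ∀ z ∈ M, x ≠ y → y ≠ z → x ≠ z →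
      ¬ Collinear ℝ ({x, y, z} : Set (Fin 2 → ℝ))) :
    ∃ (f g : (Fin 2 → ℝ) →ₗ[ℝ] ℝ) (t s : ℝ),
      LinearIndependent ℝ ![f, g] ∧
      (∃ p : Fin 2 → ℝ, f p = t ∧ g p = s) ∧
      (∀ x ∈ M, f x ≠ t ∧ g x ≠ s) ∧
      M.card / 4 ≤ (M.filter (fun x => f x < t ∧ g x < s)).card ∧
      M.card / 4 ≤ (M.filter (fun x => f x < t ∧ s < g x)).card ∧
      M.card / 4 ≤ (M.filter (fun x => t < f x ∧ g x < s)).card ∧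
      M.card / 4 ≤ (M.filter (fun x => t < f x ∧ s < g x)).card := by
  classical
  have hM₂ : ∀ g : (Fin 2 → ℝ) →ₗ[ℝ] ℝ, g ≠ 0 → ∀ t, #{x ∈ M | g x = t} ≤ 2 :=
    fun g hg t => card_filter_apply_eq_le_two (by simp) hgen hg t
  obtain ⟨f, t, hfM, hlt, hgt, -⟩ := exists_line_splitting_both (k := 2 * (#M / 4)) hM₂
    subset_rfl subset_rfl (by omega) (by omega) (by omega)
  obtain ⟨g, s, hgM, h₁, h₂, h₃, h₄⟩ := exists_line_splitting_both (k := #M / 4) hM₂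
    (filter_subset (f · < t) M) (filter_subset (t < f ·) M) (by omega) hlt hgt
  simp only [filter_filter] at h₁ h₂ h₃ h₄
  have hex {p : (Fin 2 → ℝ) → Prop} [DecidablePred p] (h : #M / 4 ≤ #{x ∈ M | p x}) :
      ∃ x, p x := by
    obtain ⟨x, hx⟩ := card_pos.1 (show 0 < #{x ∈ M | p x} by omega)
    exact ⟨x, (mem_filter.1 hx).2⟩
  have hfg := linearIndependent_pair_of_quadrants (hex h₁) (hex h₂) (hex h₃) (hex h₄)
  exact ⟨f, g, t, s, hfg, exists_apply_eq_apply_eq_of_linearIndependent hfg t s,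
    fun x hx => ⟨hfM x hx, hgM x hx⟩, h₁, h₂, h₃, h₄⟩
end
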